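/- arXiv:2604.04162 — 7 statements merged into one kernel-verified Lean document; each statement's English description precedes it below -/
import Mathlib

section
/- Let a < 0 < b be real numbers, let F be holomorphic on the strip Ω_{a,b}, suppose F has a determining function f_l on Ω_{a,0} and a determining function f_r on Ω_{0,b}, and suppose F satisfies the Phragmén–Lindelöf condition on Ω_{a,b}. Then for every δ with 0 < δ < min{|a|, b, 1} there exist constants R₀ > 0 and M > 0 such that for all R ≥ R₀ and all x ∈ [−δ, δ] one has |F(x+iR)/(x+iR)| ≤ M and |F(x−iR)/(x−iR)| ≤ M. -/
open MeasureTheory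

/-- `f` is a (locally integrable) determining function of `F` on the vertical strip
`{s : ℂ | a < Re s < b}`: the bilateral Laplace transform of `f` converges absolutely
at every point of the strip and represents `F` there. -/
def IsDeterminingOn (F : ℂ → ℂ) (f : ℝ → ℂ) (a b : ℝ) : Prop :=
  MeasureTheory.LocallyIntegrable f MeasureTheory.volume ∧
  ∀ s : ℂ, a < s.re → s.re < b →
    MeasureTheory.Integrable (fun t : ℝ => Complex.exp (-s * t) * f t) ∧
    F s = ∫ t : ℝ, Complex.exp (-s * t) * f t

/-- The Phragmén–Lindelöf growth condition for `F` on the strip `a < Re s < b`. -/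
def PhragmenLindelofCond (F : ℂ → ℂ) (a b : ℝ) : Prop :=
  ∃ A B Y K : ℝ, 0 < A ∧ 0 < B ∧ 0 < Y ∧ 0 < K ∧ K < Real.pi / (b - a) ∧
    ∀ x y : ℝ, a < x → x < b → Y ≤ |y| →
      ‖F (x + y * Complex.I)‖ ≤ A * Real.exp (B * Real.exp (K * |y|))

/-!
On the lines `Re s = ±δ` the function `F` is bounded by the absolutely convergent Laplace
integrals of `fl` and `fr`. The Phragmén–Lindelöf principle for the strip `-δ ≤ Re s ≤ δ`
propagates this bound to the whole closed strip, and dividing by `s` does not increase it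
once `|Im s| ≥ 1`.
-/

open Complex Filter Set

variable {F : ℂ → ℂ} {a b : ℝ}

namespace IsDeterminingOn

lemma norm_le_integral_norm {f : ℝ → ℂ} (h : IsDeterminingOn F f a b) {s : ℂ}
    (has : a < s.re) (hsb : s.re < b) :
    ‖F s‖ ≤ ∫ t : ℝ, ‖exp (-(s.re : ℂ) * t) * f t‖ := by
  rw [(h.2 s has hsb).2]
  refine (norm_integral_le_integral_norm _).trans_eq (integral_congr_ae (.of_forall fun t => ?_))
  simp [norm_exp]

lemma exists_norm_le_of_re_eq {f : ℝ → ℂ} (h : IsDeterminingOn F f a b) {x : ℝ}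
    (hax : a < x) (hxb : x < b) : ∃ C, ∀ s : ℂ, s.re = x → ‖F s‖ ≤ C :=
  ⟨∫ t : ℝ, ‖exp (-(x : ℂ) * t) * f t‖, fun s hs => by
    subst hs
    exact h.norm_le_integral_norm hax hxb⟩

end IsDeterminingOn

namespace PhragmenLindelofCond

lemma isBigO_on_substrip (h : PhragmenLindelofCond F a b) {c d : ℝ}
    (hac : a ≤ c) (hcd : c < d) (hdb : d ≤ b) :
    ∃ K < Real.pi / (d - c), ∃ B, F =O[comap (_root_.abs ∘ im) atTop ⊓ 𝓟 (re ⁻¹' Ioo c d)]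
      fun z => Real.exp (B * Real.exp (K * |z.im|)) := by
  obtain ⟨A, B, Y, K, -, -, -, -, hKlt, hbound⟩ := h
  refine ⟨K, hKlt.trans_le ?_, B, Asymptotics.IsBigO.of_bound A ?_⟩
  · exact div_le_div_of_nonneg_left Real.pi_pos.le (sub_pos.2 hcd) (by linarith)
  have hY : ∀ᶠ z : ℂ in comap (_root_.abs ∘ im) atTop, Y ≤ |z.im| :=
    tendsto_comap.eventually (eventually_ge_atTop Y)
  filter_upwards [hY.filter_mono inf_le_left, mem_inf_of_right (mem_principal_self _)]
    with z hzY hz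
  have := hbound z.re z.im (hac.trans_lt hz.1) (hz.2.trans_le hdb) hzY
  rwa [re_add_im, ← abs_of_pos (Real.exp_pos _), ← Real.norm_eq_abs] at this

lemma norm_le_of_norm_le_of_re_eq (hF : DifferentiableOn ℂ F {s : ℂ | a < s.re ∧ s.re < b})
    (h : PhragmenLindelofCond F a b) {c d C : ℝ} (hac : a < c) (hcd : c < d) (hdb : d < b)
    (hc : ∀ z : ℂ, z.re = c → ‖F z‖ ≤ C) (hd : ∀ z : ℂ, z.re = d → ‖F z‖ ≤ C)
    {z : ℂ} (hcz : c ≤ z.re) (hzd : z.re ≤ d) : ‖F z‖ ≤ C := by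
  have hcl : DiffContOnCl ℂ F (re ⁻¹' Ioo c d) := by
    refine DifferentiableOn.diffContOnCl (hF.mono ?_)
    rw [closure_preimage_re, closure_Ioo hcd.ne]
    exact fun w hw => ⟨hac.trans_le hw.1, hw.2.trans_lt hdb⟩
  exact PhragmenLindelof.vertical_strip hcl (h.isBigO_on_substrip hac.le hcd hdb.le) hc hd hcz hzd

end PhragmenLindelofCond

lemma norm_div_le_of_one_le_abs_im {w z : ℂ} {C : ℝ} (hw : ‖w‖ ≤ C) (hz : 1 ≤ |z.im|) :
    ‖w / z‖ ≤ C := by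
  rw [norm_div]
  exact (div_le_self (norm_nonneg w) (hz.trans (abs_im_le_norm z))).trans hw

theorem statement0_general (a b : ℝ) (ha : a < 0)
    (F : ℂ → ℂ) (fl fr : ℝ → ℂ)
    (hF : DifferentiableOn ℂ F {s : ℂ | a < s.re ∧ s.re < b})
    (hl : IsDeterminingOn F fl a 0) (hr : IsDeterminingOn F fr 0 b)
    (hPL : PhragmenLindelofCond F a b) :
    ∀ δ : ℝ, 0 < δ → δ < min (min |a| b) 1 →
      ∃ R₀ M : ℝ, 0 < R₀ ∧ 0 < M ∧
        ∀ R : ℝ, R₀ ≤ R → ∀ x : ℝ, x ∈ Set.Icc (-δ) δ →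
          ‖F (x + R * Complex.I) / (x + R * Complex.I)‖ ≤ M ∧
          ‖F (x - R * Complex.I) / (x - R * Complex.I)‖ ≤ M := by
  intro δ hδ hδm
  have hδa : a < -δ := by
    have := (hδm.trans_le (min_le_left _ _)).trans_le (min_le_left _ _)
    rw [abs_of_neg ha] at this
    linarith
  have hδb : δ < b := (hδm.trans_le (min_le_left _ _)).trans_le (min_le_right _ _)
  obtain ⟨Cl, hCl⟩ := hl.exists_norm_le_of_re_eq hδa (neg_neg_of_pos hδ)
  obtain ⟨Cr, hCr⟩ := hr.exists_norm_le_of_re_eq hδ hδb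
  have hstrip : ∀ z : ℂ, -δ ≤ z.re → z.re ≤ δ → ‖F z‖ ≤ max Cl Cr :=
    fun z => hPL.norm_le_of_norm_le_of_re_eq hF hδa (by linarith) hδb
      (fun w hw => (hCl w hw).trans (le_max_left _ _))
      (fun w hw => (hCr w hw).trans (le_max_right _ _))
  have hC : 0 ≤ max Cl Cr :=
    (norm_nonneg _).trans (hstrip 0 (by simpa using hδ.le) (by simpa using hδ.le))
  have hline : ∀ x ∈ Icc (-δ) δ, ∀ y : ℝ, 1 ≤ |y| →
      ‖F (x + y * I) / (x + y * I)‖ ≤ max Cl Cr + 1 := fun x hx y hy =>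
    (norm_div_le_of_one_le_abs_im (hstrip _ (by simpa using hx.1) (by simpa using hx.2))
      (by simpa using hy)).trans (le_add_of_nonneg_right zero_le_one)
  refine ⟨1, max Cl Cr + 1, one_pos, by linarith, fun R hR x hx => ⟨?_, ?_⟩⟩
  · exact hline x hx R (hR.trans (le_abs_self R))
  · simpa [sub_eq_add_neg] using hline x hx (-R) (by rwa [abs_neg, abs_of_pos (by linarith)])

theorem statement0 (a b : ℝ) (ha : a < 0) (hb : 0 < b)
    (F : ℂ → ℂ) (fl fr : ℝ → ℂ)
    (hF : DifferentiableOn ℂ F {s : ℂ | a < s.re ∧ s.re < b})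
    (hl : IsDeterminingOn F fl a 0) (hr : IsDeterminingOn F fr 0 b)
    (hPL : PhragmenLindelofCond F a b) :
    ∀ δ : ℝ, 0 < δ → δ < min (min |a| b) 1 →
      ∃ R₀ M : ℝ, 0 < R₀ ∧ 0 < M ∧
        ∀ R : ℝ, R₀ ≤ R → ∀ x : ℝ, x ∈ Set.Icc (-δ) δ →
          ‖F (x + R * Complex.I) / (x + R * Complex.I)‖ ≤ M ∧
          ‖F (x - R * Complex.I) / (x - R * Complex.I)‖ ≤ M :=
  statement0_general a b ha F fl fr hF hl hr hPL
end

section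
/- Let p be a nonzero real number, t a real number, r a positive integer, and a₁, …, a_r ∈ ℂ. Define g(s) = Σ_{k=1}^r a_k·(s−ip)^{−k} and R(t) = e^{ipt}·Σ_{k=1}^{r} Σ_{l=0}^{k−1} a_k·(−1)^{l−k+1}·(ip)^{l−k}·t^l/l!. Then for every radius ρ with 0 < ρ < |p|, the circle integral (1/(2πi)) ∮_{|s−ip|=ρ} e^{st}·g(s)/s ds equals R(t); moreover, as a function of t, R is differentiable with R′(t) = e^{ipt}·Σ_{k=1}^{r} a_k·t^{k−1}/(k−1)!. -/
/-!
Put `c = i p`. Since `ρ < |c|`, the function `z ↦ e^{zt} / z` is holomorphic on the closed disc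
`|z - c| ≤ ρ`, so by the Cauchy integral formula for derivatives the integral of
`e^{zt} (z - c)^{-k} / z` is `2πi / (k-1)!` times the `(k-1)`-st derivative of `e^{zt} / z` at `c`,
which the Leibniz rule evaluates to the `k`-th summand of `R`.

For the derivative, write the `k`-th summand of `R` as `e^{cτ} Σ_{l<k} b_l τ^l / l!`. Its
derivative is `e^{cτ}` times `c b_{k-1} τ^{k-1}/(k-1)! + Σ_{l<k-1} (c b_l + b_{l+1}) τ^l / l!`,
and the coefficients satisfy `c b_l + b_{l+1} = 0` and `c b_{k-1} = a_k`.
-/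

open MeasureTheory intervalIntegral Complex Metric Finset Real
open scoped Nat

lemma circleIntegral_eq_intervalIntegral_cexp_I_mul (f : ℂ → ℂ) (c : ℂ) (ρ : ℝ) :
    ∮ z in C(c, ρ), f z =
      ∫ θ in (0 : ℝ)..2 * π, f (c + ρ * exp (I * θ)) * (I * ρ * exp (I * θ)) := by
  simp only [circleIntegral, deriv_circleMap, circleMap, zero_add, smul_eq_mul, mul_comm _ I]
  refine integral_congr fun θ _ => ?_
  ring

lemma iteratedDeriv_cexp_const_mul_mul_inv {c : ℂ} (hc : c ≠ 0) (t : ℂ) (n : ℕ) :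
    iteratedDeriv n (fun z => exp (t * z) * z⁻¹) c =
      n ! * exp (t * c) *
        ∑ l ∈ range (n + 1), (-1) ^ ((l : ℤ) - n) * c ^ ((l : ℤ) - n - 1) * t ^ l / l ! := by
  have hexp : ContDiff ℂ n fun z => exp (t * z) := by fun_prop
  simp only [iteratedDeriv_fun_mul hexp.contDiffAt (contDiffAt_inv ℂ hc),
    iteratedDeriv_cexp_const_mul]
  simp only [iteratedDeriv_eq_iterate, iter_deriv_inv, mul_sum]
  refine sum_congr rfl fun l hl => ?_
  obtain ⟨m, rfl⟩ := Nat.exists_eq_add_of_le (Nat.lt_succ_iff.mp (mem_range.mp hl))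
  have hchoose := Nat.choose_mul_factorial_mul_factorial (Nat.le_add_right l m)
  rw [Nat.add_sub_cancel_left] at *
  have hsign : (-1 : ℂ) ^ ((l : ℤ) - (l + m : ℕ)) = (-1) ^ m := by
    push_cast
    rw [show (l : ℤ) - (l + m) = -m by ring, zpow_neg, zpow_natCast, ← inv_pow, inv_neg_one]
  rw [hsign, show (l : ℤ) - (l + m : ℕ) - 1 = -1 - m by push_cast; ring, ← hchoose]
  push_cast
  field_simp [Nat.cast_ne_zero.mpr l.factorial_ne_zero]

lemma ne_zero_of_mem_closedBall_of_lt_norm {E : Type*} [SeminormedAddCommGroup E] {c z : E}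
    {ρ : ℝ} (hρc : ρ < ‖c‖) (hz : z ∈ closedBall c ρ) : z ≠ 0 := by
  rintro rfl
  rw [mem_closedBall, dist_zero_left] at hz
  exact hz.not_gt hρc

lemma circleIntegrable_cexp_mul_sub_zpow_div {c : ℂ} {ρ : ℝ} (hρ : 0 < ρ) (hρc : ρ < ‖c‖)
    (t : ℂ) (m : ℤ) : CircleIntegrable (fun z => exp (z * t) * (z - c) ^ m / z) c ρ :=
  ContinuousOn.circleIntegrable hρ.le <|
    ((Continuous.continuousOn (by fun_prop)).mul ((continuousOn_id.sub continuousOn_const).zpow₀ m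
      fun _ hz => Or.inl (sub_ne_zero.mpr (ne_of_mem_sphere hz hρ.ne')))).div continuousOn_id
      fun _ hz => ne_zero_of_mem_closedBall_of_lt_norm hρc (sphere_subset_closedBall hz)

lemma circleIntegral_cexp_mul_sub_zpow_div {c : ℂ} {ρ : ℝ} (hρ : 0 < ρ) (hρc : ρ < ‖c‖) (t : ℂ)
    {k : ℕ} (hk : k ≠ 0) :
    ∮ z in C(c, ρ), exp (z * t) * (z - c) ^ (-(k : ℤ)) / z =
      2 * π * I * exp (c * t) *
        ∑ l ∈ range k, (-1) ^ ((l : ℤ) - k + 1) * c ^ ((l : ℤ) - k) * t ^ l / l ! := by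
  obtain ⟨n, rfl⟩ := Nat.exists_eq_add_one_of_ne_zero hk
  have hc : c ≠ 0 := norm_pos_iff.mp (hρ.trans hρc)
  have hdiff : DifferentiableOn ℂ (fun z => exp (t * z) * z⁻¹) (closedBall c ρ) := fun z hz =>
    ((by fun_prop : Differentiable ℂ fun z => exp (t * z)).differentiableAt.mul
      (differentiableAt_inv (ne_zero_of_mem_closedBall_of_lt_norm hρc hz))).differentiableWithinAt
  calc ∮ z in C(c, ρ), exp (z * t) * (z - c) ^ (-((n + 1 : ℕ) : ℤ)) / z
      = ∮ z in C(c, ρ), (1 / (z - c) ^ (n + 1)) • (exp (t * z) * z⁻¹) := by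
        congr 1 with z
        rw [zpow_neg, zpow_natCast, smul_eq_mul, mul_comm t z]
        ring
    _ = _ := by
      rw [hdiff.circleIntegral_one_div_sub_center_pow_smul hρ n,
        iteratedDeriv_cexp_const_mul_mul_inv hc, smul_eq_mul, mul_comm t c]
      have hsum : ∑ l ∈ range (n + 1), (-1) ^ ((l : ℤ) - n) * c ^ ((l : ℤ) - n - 1) * t ^ l / l ! =
          ∑ l ∈ range (n + 1),
            (-1) ^ ((l : ℤ) - (n + 1 : ℕ) + 1) * c ^ ((l : ℤ) - (n + 1 : ℕ)) * t ^ l / l ! :=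
        sum_congr rfl fun l _ => by push_cast; ring_nf
      rw [hsum]
      field_simp [Nat.cast_ne_zero.mpr n.factorial_ne_zero]

lemma circleIntegral_cexp_mul_sum_sub_zpow_div {c : ℂ} {ρ : ℝ} (hρ : 0 < ρ) (hρc : ρ < ‖c‖)
    (t : ℂ) (r : ℕ) (a : ℕ → ℂ) :
    ∮ z in C(c, ρ), exp (z * t) * (∑ k ∈ Icc 1 r, a k * (z - c) ^ (-(k : ℤ))) / z =
      2 * π * I * (exp (c * t) * ∑ k ∈ Icc 1 r, ∑ l ∈ range k,
        a k * (-1) ^ ((l : ℤ) - k + 1) * c ^ ((l : ℤ) - k) * t ^ l / l !) := by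
  have hint : ∀ k ∈ Icc 1 r,
      CircleIntegrable (fun z => a k * (exp (z * t) * (z - c) ^ (-(k : ℤ)) / z)) c ρ := fun k _ =>
    (circleIntegrable_cexp_mul_sub_zpow_div hρ hρc t _).const_smul
  calc _ = ∮ z in C(c, ρ), ∑ k ∈ Icc 1 r, a k * (exp (z * t) * (z - c) ^ (-(k : ℤ)) / z) := by
        congr 1 with z
        rw [mul_sum, sum_div]
        exact sum_congr rfl fun k _ => by ring
    _ = ∑ k ∈ Icc 1 r, a k * (2 * π * I * exp (c * t) * ∑ l ∈ range k,
          (-1) ^ ((l : ℤ) - k + 1) * c ^ ((l : ℤ) - k) * t ^ l / l !) := by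
        rw [circleIntegral.integral_fun_sum hint]
        refine sum_congr rfl fun k hk => ?_
        rw [circleIntegral.integral_const_mul, circleIntegral_cexp_mul_sub_zpow_div hρ hρc t
          (Nat.one_le_iff_ne_zero.mp (mem_Icc.mp hk).1)]
    _ = _ := by
        simp only [mul_sum]
        exact sum_congr rfl fun k _ => sum_congr rfl fun l _ => by ring

lemma hasDerivAt_sum_range_mul_pow_div_factorial (b : ℕ → ℂ) (n : ℕ) (w : ℂ) :
    HasDerivAt (fun w => ∑ l ∈ range (n + 1), b l * w ^ l / l !)
      (∑ l ∈ range n, b (l + 1) * w ^ l / l !) w := by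
  simp only [sum_range_succ' _ n, pow_zero, Nat.factorial_zero]
  refine (HasDerivAt.fun_sum fun l _ => ?_).add_const _
  refine (((hasDerivAt_pow (l + 1) w).const_mul (b (l + 1))).div_const
    ((l + 1)! : ℂ)).congr_deriv ?_
  rw [Nat.add_sub_cancel, Nat.factorial_succ]
  push_cast
  field_simp

lemma hasDerivAt_cexp_const_mul_mul_sum {c : ℂ} (hc : c ≠ 0) (a : ℂ) {k : ℕ} (hk : k ≠ 0)
    (w : ℂ) :
    HasDerivAt (fun w => exp (c * w) *
        ∑ l ∈ range k, a * (-1) ^ ((l : ℤ) - k + 1) * c ^ ((l : ℤ) - k) * w ^ l / l !)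
      (exp (c * w) * (a * w ^ (k - 1) / (k - 1)!)) w := by
  obtain ⟨n, rfl⟩ := Nat.exists_eq_add_one_of_ne_zero hk
  set b : ℕ → ℂ := fun l => a * (-1) ^ ((l : ℤ) - (n + 1 : ℕ) + 1) * c ^ ((l : ℤ) - (n + 1 : ℕ))
  have hb_succ (l : ℕ) : c * b l + b (l + 1) = 0 := by
    simp only [b]
    push_cast
    rw [show (l : ℤ) + 1 - (n + 1) + 1 = (l - (n + 1) + 1) + 1 by ring,
      show (l : ℤ) + 1 - (n + 1) = (l - (n + 1)) + 1 by ring]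
    generalize (l : ℤ) - (n + 1) = m
    simp only [zpow_add_one₀ (neg_ne_zero.mpr one_ne_zero : (-1 : ℂ) ≠ 0), zpow_add_one₀ hc]
    ring
  have hb_last : c * b n = a := by
    simp only [b]
    push_cast
    rw [show (n : ℤ) - (n + 1) + 1 = 0 by ring, show (n : ℤ) - (n + 1) = -1 by ring,
      zpow_zero, zpow_neg_one, mul_comm c, mul_assoc, inv_mul_cancel₀ hc]
    ring
  have hexp : HasDerivAt (fun w => exp (c * w)) (exp (c * w) * c) w := by
    simpa using ((hasDerivAt_id w).const_mul c).cexp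
  refine (hexp.mul (hasDerivAt_sum_range_mul_pow_div_factorial b n w)).congr_deriv ?_
  have hcancel :
      c * ∑ l ∈ range n, b l * w ^ l / l ! + ∑ l ∈ range n, b (l + 1) * w ^ l / l ! = 0 := by
    rw [mul_sum, ← sum_add_distrib]
    exact sum_eq_zero fun l _ => by linear_combination (w ^ l / l !) * hb_succ l
  rw [sum_range_succ, Nat.add_sub_cancel, ← hb_last]
  linear_combination exp (c * w) * hcancel

theorem statement3_general (p : ℝ) (hp : p ≠ 0) (t : ℝ) (r : ℕ) (a : ℕ → ℂ)
    (g : ℂ → ℂ)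
    (hg : ∀ s : ℂ, g s = ∑ k ∈ Finset.Icc 1 r, a k * (s - Complex.I * p) ^ (-(k : ℤ)))
    (R : ℝ → ℂ)
    (hR : ∀ τ : ℝ, R τ = Complex.exp (Complex.I * p * τ) *
      ∑ k ∈ Finset.Icc 1 r, ∑ l ∈ Finset.range k,
        a k * (-1 : ℂ) ^ ((l : ℤ) - k + 1) * (Complex.I * p) ^ ((l : ℤ) - k) *
          (τ : ℂ) ^ l / (Nat.factorial l)) :
    (∀ ρ : ℝ, 0 < ρ → ρ < |p| →
      (1 / (2 * Real.pi * Complex.I)) * ∫ θ in (0:ℝ)..(2 * Real.pi),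
        (Complex.exp ((Complex.I * p + ρ * Complex.exp (Complex.I * θ)) * t) *
            g (Complex.I * p + ρ * Complex.exp (Complex.I * θ)) /
            (Complex.I * p + ρ * Complex.exp (Complex.I * θ))) *
          (Complex.I * ρ * Complex.exp (Complex.I * θ)) = R t) ∧
    HasDerivAt R (Complex.exp (Complex.I * p * t) *
      ∑ k ∈ Finset.Icc 1 r, a k * (t : ℂ) ^ (k - 1) / (Nat.factorial (k - 1))) t := by
  set c : ℂ := I * p
  refine ⟨fun ρ hρ hρp => ?_, ?_⟩
  · rw [← circleIntegral_eq_intervalIntegral_cexp_I_mul (fun z => exp (z * t) * g z / z),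
      funext hg, circleIntegral_cexp_mul_sum_sub_zpow_div hρ (by simpa [c] using hρp), ← mul_assoc,
      one_div_mul_cancel two_pi_I_ne_zero, one_mul, hR]
  · have hc : c ≠ 0 := mul_ne_zero I_ne_zero (ofReal_ne_zero.mpr hp)
    rw [funext hR]
    simpa only [← mul_sum] using HasDerivAt.fun_sum fun k hk =>
      (hasDerivAt_cexp_const_mul_mul_sum hc (a k)
        (Nat.one_le_iff_ne_zero.mp (mem_Icc.mp hk).1) (t : ℂ)).comp_ofReal

theorem statement3 (p : ℝ) (hp : p ≠ 0) (t : ℝ) (r : ℕ) (hr : 0 < r) (a : ℕ → ℂ)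
    (g : ℂ → ℂ)
    (hg : ∀ s : ℂ, g s = ∑ k ∈ Finset.Icc 1 r, a k * (s - Complex.I * p) ^ (-(k : ℤ)))
    (R : ℝ → ℂ)
    (hR : ∀ τ : ℝ, R τ = Complex.exp (Complex.I * p * τ) *
      ∑ k ∈ Finset.Icc 1 r, ∑ l ∈ Finset.range k,
        a k * (-1 : ℂ) ^ ((l : ℤ) - k + 1) * (Complex.I * p) ^ ((l : ℤ) - k) *
          (τ : ℂ) ^ l / (Nat.factorial l)) :
    (∀ ρ : ℝ, 0 < ρ → ρ < |p| →
      (1 / (2 * Real.pi * Complex.I)) * ∫ θ in (0:ℝ)..(2 * Real.pi),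
        (Complex.exp ((Complex.I * p + ρ * Complex.exp (Complex.I * θ)) * t) *
            g (Complex.I * p + ρ * Complex.exp (Complex.I * θ)) /
            (Complex.I * p + ρ * Complex.exp (Complex.I * θ))) *
          (Complex.I * ρ * Complex.exp (Complex.I * θ)) = R t) ∧
    HasDerivAt R (Complex.exp (Complex.I * p * t) *
      ∑ k ∈ Finset.Icc 1 r, a k * (t : ℂ) ^ (k - 1) / (Nat.factorial (k - 1))) t :=
  statement3_general p hp t r a g hg R hR
end

section
/- Let (p_n)_{n≥1} be a sequence of distinct real numbers with no finite accumulation point, let (r_n)_{n≥1} be positive integers, and let a_{n,k} ∈ ℂ for 1 ≤ k ≤ r_n. Assume that for every ε > 0 the double series Σ_{n=1}^∞ Σ_{k=1}^{r_n} |a_{n,k}|·ε^{−k} converges. Then the series P(s) = Σ_{n=1}^∞ Σ_{k=1}^{r_n} a_{n,k}·(s−ip_n)^{−k} converges uniformly on every compact subset of ℂ not containing any of the points ip_n, and P defines a holomorphic function on ℂ \ {ip_n : n ≥ 1}. -/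
/-!
All poles lie at distance at least some `ε > 0` from a compact set `K` avoiding them, since
the poles form a closed set because they have no finite accumulation point. Hence the `n`-th
principal part is bounded on `K` by `∑ₖ |a_{n,k}| ε^{-k}`, and the Weierstrass M-test gives
uniform convergence on `K`. Holomorphy follows since a locally uniform limit of holomorphic
functions is holomorphic.
-/

open Filter Set Metric

lemma isClosed_range_of_tendsto_cofinite_cocompact {X : Type*} [TopologicalSpace X] [T2Space X]
    [CompactlyCoherentSpace X] {z : ℕ → X} (hz : Tendsto z cofinite (cocompact X)) :
    IsClosed (range z) :=
  (isProperMap_iff_tendsto_cocompact.2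
    ⟨continuous_of_discreteTopology, by rwa [cocompact_eq_cofinite]⟩).isClosed_range

lemma IsCompact.exists_pos_forall_le_dist {X : Type*} [PseudoMetricSpace X] {K T : Set X}
    (hK : IsCompact K) (hT : IsClosed T) (hKT : Disjoint K T) :
    ∃ ε > 0, ∀ x ∈ K, ∀ y ∈ T, ε ≤ dist x y := by
  obtain ⟨ε, hε, hsub⟩ :=
    hK.exists_thickening_subset_open hT.isOpen_compl (subset_compl_iff_disjoint_right.2 hKT)
  refine ⟨ε, hε, fun x hx y hy => not_lt.1 fun hxy => hsub ?_ hy⟩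
  exact mem_thickening_iff.2 ⟨x, hx, by rwa [dist_comm]⟩

lemma norm_zpow_neg_natCast_le {𝕜 : Type*} [NormedDivisionRing 𝕜] {w : 𝕜} {ε : ℝ}
    (hε : 0 < ε) (hw : ε ≤ ‖w‖) (k : ℕ) : ‖w ^ (-(k : ℤ))‖ ≤ ε ^ (-(k : ℤ)) := by
  rw [norm_zpow, zpow_neg, zpow_neg, zpow_natCast, zpow_natCast]
  exact inv_anti₀ (pow_pos hε k) (pow_le_pow_left₀ hε.le hw k)

lemma tendsto_abs_cofinite_atTop {ι : Type*} {p : ι → ℝ}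
    (hp : ∀ C : ℝ, 0 < C → {n | |p n| ≤ C}.Finite) : Tendsto (|p ·|) cofinite atTop := by
  refine tendsto_atTop.2 fun C => eventually_cofinite.2 ?_
  refine (hp (max C 1) (by positivity)).subset fun n hn => ?_
  exact (not_le.1 hn).le.trans (le_max_left C 1)

section PrincipalParts

variable {𝕜 : Type*} [NormedField 𝕜] (z : ℕ → 𝕜) (r : ℕ → ℕ) (c : ℕ → ℕ → 𝕜)

def principalPart (n : ℕ) (s : 𝕜) : 𝕜 :=
  ∑ k ∈ Finset.Icc 1 (r n), c n k * (s - z n) ^ (-(k : ℤ))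

variable {z r c}

lemma norm_principalPart_le {ε : ℝ} (hε : 0 < ε) {n : ℕ} {s : 𝕜} (hs : ε ≤ ‖s - z n‖) :
    ‖principalPart z r c n s‖ ≤ ∑ k ∈ Finset.Icc 1 (r n), ‖c n k‖ * ε ^ (-(k : ℤ)) := by
  refine (norm_sum_le _ _).trans (Finset.sum_le_sum fun k _ => ?_)
  rw [norm_mul]
  exact mul_le_mul_of_nonneg_left (norm_zpow_neg_natCast_le hε hs k) (norm_nonneg _)

lemma exists_pos_forall_le_norm_sub_of_tendsto_cocompact [ProperSpace 𝕜]
    (hz : Tendsto z cofinite (cocompact 𝕜)) {K : Set 𝕜} (hK : IsCompact K)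
    (hKz : ∀ n, z n ∉ K) : ∃ ε > 0, ∀ s ∈ K, ∀ n, ε ≤ ‖s - z n‖ := by
  have hdisj : Disjoint K (range z) := disjoint_right.2 <| by rintro _ ⟨n, rfl⟩; exact hKz n
  obtain ⟨ε, hε, hdist⟩ :=
    hK.exists_pos_forall_le_dist (isClosed_range_of_tendsto_cofinite_cocompact hz) hdisj
  exact ⟨ε, hε, fun s hs n => (hdist s hs (z n) (mem_range_self n)).trans_eq (dist_eq_norm _ _)⟩

lemma tendstoUniformlyOn_tsum_principalPart [ProperSpace 𝕜]
    (hsum : ∀ ε : ℝ, 0 < ε → Summable fun n =>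
      ∑ k ∈ Finset.Icc 1 (r n), ‖c n k‖ * ε ^ (-(k : ℤ)))
    (hz : Tendsto z cofinite (cocompact 𝕜)) {K : Set 𝕜} (hK : IsCompact K)
    (hKz : ∀ n, z n ∉ K) :
    TendstoUniformlyOn (fun N s => ∑ n ∈ Finset.range N, principalPart z r c n s)
      (fun s => ∑' n, principalPart z r c n s) atTop K := by
  obtain ⟨ε, hε, hKε⟩ := exists_pos_forall_le_norm_sub_of_tendsto_cocompact hz hK hKz
  exact tendstoUniformlyOn_tsum_nat (hsum ε hε) fun n s hs => norm_principalPart_le hε (hKε s hs n)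

end PrincipalParts

lemma differentiableOn_principalPart {𝕜 : Type*} [NontriviallyNormedField 𝕜] (z : ℕ → 𝕜)
    (r : ℕ → ℕ) (c : ℕ → ℕ → 𝕜) (n : ℕ) :
    DifferentiableOn 𝕜 (principalPart z r c n) {s | s ≠ z n} := fun s hs => by
  unfold principalPart
  exact (DifferentiableAt.fun_sum fun k _ => ((differentiableAt_id.sub_const (z n)).zpow
    (Or.inl (sub_ne_zero.2 hs))).const_mul _).differentiableWithinAt

lemma differentiableOn_tsum_principalPart {z : ℕ → ℂ} {r : ℕ → ℕ} {c : ℕ → ℕ → ℂ}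
    (hsum : ∀ ε : ℝ, 0 < ε → Summable fun n =>
      ∑ k ∈ Finset.Icc 1 (r n), ‖c n k‖ * ε ^ (-(k : ℤ)))
    (hz : Tendsto z cofinite (cocompact ℂ)) :
    DifferentiableOn ℂ (fun s => ∑' n, principalPart z r c n s) {s | ∀ n, s ≠ z n} := by
  have hU : IsOpen {s | ∀ n, s ≠ z n} := by
    convert (isClosed_range_of_tendsto_cofinite_cocompact hz).isOpen_compl using 1
    ext; simp [eq_comm]
  have hloc : TendstoLocallyUniformlyOn
      (fun N s => ∑ n ∈ Finset.range N, principalPart z r c n s)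
      (fun s => ∑' n, principalPart z r c n s) atTop {s | ∀ n, s ≠ z n} :=
    (tendstoLocallyUniformlyOn_iff_forall_isCompact hU).2 fun K hKU hK =>
      tendstoUniformlyOn_tsum_principalPart hsum hz hK fun n hn => hKU hn n rfl
  refine hloc.differentiableOn (Eventually.of_forall fun N => ?_) hU
  exact DifferentiableOn.fun_sum fun n _ =>
    (differentiableOn_principalPart z r c n).mono fun s hs => hs n

theorem statement4_general (p : ℕ → ℝ)
    (hacc : ∀ C : ℝ, 0 < C → {n : ℕ | |p n| ≤ C}.Finite)
    (r : ℕ → ℕ) (c : ℕ → ℕ → ℂ)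
    (hsum : ∀ ε : ℝ, 0 < ε → Summable (fun n : ℕ =>
      ∑ k ∈ Finset.Icc 1 (r n), ‖c n k‖ * ε ^ (-(k : ℤ)))) :
    (∀ K : Set ℂ, IsCompact K → (∀ n, Complex.I * p n ∉ K) →
      TendstoUniformlyOn
        (fun (N : ℕ) (s : ℂ) => ∑ n ∈ Finset.range N, ∑ k ∈ Finset.Icc 1 (r n),
          c n k * (s - Complex.I * p n) ^ (-(k : ℤ)))
        (fun s : ℂ => ∑' n : ℕ, ∑ k ∈ Finset.Icc 1 (r n),
          c n k * (s - Complex.I * p n) ^ (-(k : ℤ)))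
        Filter.atTop K) ∧
    DifferentiableOn ℂ
      (fun s : ℂ => ∑' n : ℕ, ∑ k ∈ Finset.Icc 1 (r n),
        c n k * (s - Complex.I * p n) ^ (-(k : ℤ)))
      {s : ℂ | ∀ n, s ≠ Complex.I * p n} := by
  have hz : Tendsto (fun n => Complex.I * p n) cofinite (cocompact ℂ) := by
    rw [← cobounded_eq_cocompact, ← tendsto_norm_atTop_iff_cobounded]
    simpa using tendsto_abs_cofinite_atTop hacc
  exact ⟨fun K hK hKz => tendstoUniformlyOn_tsum_principalPart hsum hz hK hKz,
    differentiableOn_tsum_principalPart hsum hz⟩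

theorem statement4 (p : ℕ → ℝ) (hp : Function.Injective p)
    (hacc : ∀ C : ℝ, 0 < C → {n : ℕ | |p n| ≤ C}.Finite)
    (r : ℕ → ℕ) (hrpos : ∀ n, 0 < r n) (c : ℕ → ℕ → ℂ)
    (hsum : ∀ ε : ℝ, 0 < ε → Summable (fun n : ℕ =>
      ∑ k ∈ Finset.Icc 1 (r n), ‖c n k‖ * ε ^ (-(k : ℤ)))) :
    (∀ K : Set ℂ, IsCompact K → (∀ n, Complex.I * p n ∉ K) →
      TendstoUniformlyOn
        (fun (N : ℕ) (s : ℂ) => ∑ n ∈ Finset.range N, ∑ k ∈ Finset.Icc 1 (r n),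
          c n k * (s - Complex.I * p n) ^ (-(k : ℤ)))
        (fun s : ℂ => ∑' n : ℕ, ∑ k ∈ Finset.Icc 1 (r n),
          c n k * (s - Complex.I * p n) ^ (-(k : ℤ)))
        Filter.atTop K) ∧
    DifferentiableOn ℂ
      (fun s : ℂ => ∑' n : ℕ, ∑ k ∈ Finset.Icc 1 (r n),
        c n k * (s - Complex.I * p n) ^ (-(k : ℤ)))
      {s : ℂ | ∀ n, s ≠ Complex.I * p n} :=
  statement4_general p hacc r c hsum
end

section
/- For every s ∈ ℂ with 0 < Re(s) < 1, the function t ↦ e^{−st}·{e^t} is Lebesgue integrable on (0,∞), the function t ↦ e^{−st}·e^{t} is Lebesgue integrable on (−∞,0), and ζ(s)/s = −∫_0^∞ e^{−st}·{e^t} dt − ∫_{−∞}^0 e^{−st}·e^{t} dt, where ζ is the Riemann zeta function and {x} = x − ⌊x⌋ denotes the fractional part. -/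
/-!
For `1 < re s`, partial summation gives `ζ(s) = s ∫₁^∞ ⌊t⌋ t^(-s-1) dt`, and writing
`⌊t⌋ = t - {t}` turns this into `ζ(s) = s/(s-1) - s ∫₁^∞ {t} t^(-s-1) dt`. The last integral is
the Mellin transform at `-s` of `{t}` cut off to `t > 1`, which is holomorphic on all of `0 < re s`;
so `ζ(s) - 1/(s-1) = 1 - s ∫₁^∞ {t} t^(-s-1) dt` extends to that half-plane by analytic
continuation. The substitution `t = eᵘ` gives the integral over `(0, ∞)`, and the pole term is
`1/(s-1) = -∫_{-∞}^0 e^(-su) eᵘ du` when `re s < 1`.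
-/

open MeasureTheory Set Filter Topology Asymptotics

section

variable {E : Type*} [NormedAddCommGroup E] [NormedSpace ℂ E]

lemma ofReal_exp_cpow (u : ℝ) (s : ℂ) : (Real.exp u : ℂ) ^ s = Complex.exp (s * u) := by
  rw [Complex.cpow_def_of_ne_zero (Complex.ofReal_ne_zero.2 (Real.exp_pos u).ne'),
    ← Complex.ofReal_log (Real.exp_pos u).le, Real.log_exp, mul_comm]

lemma abs_exp_smul_cpow_smul (g : ℝ → E) (s : ℂ) (u : ℝ) :
    |Real.exp u| • ((Real.exp u : ℂ) ^ (s - 1) • g (Real.exp u))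
      = Complex.exp (s * u) • g (Real.exp u) := by
  rw [abs_of_pos (Real.exp_pos u), ← smul_assoc, ofReal_exp_cpow, Complex.real_smul,
    Complex.ofReal_exp, ← Complex.exp_add]
  ring_nf

lemma integrableOn_cpow_smul_Ioi_exp_iff (g : ℝ → E) (s : ℂ) (a : ℝ) :
    IntegrableOn (fun t : ℝ => (t : ℂ) ^ (s - 1) • g t) (Ioi (Real.exp a))
      ↔ IntegrableOn (fun u : ℝ => Complex.exp (s * u) • g (Real.exp u)) (Ioi a) := by
  rw [← Real.image_exp_Ioi, integrableOn_image_iff_integrableOn_abs_deriv_smul measurableSet_Ioi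
    (fun u _ => (Real.hasDerivAt_exp u).hasDerivWithinAt) Real.exp_injective.injOn]
  simp_rw [abs_exp_smul_cpow_smul]

lemma integral_cpow_smul_Ioi_exp (g : ℝ → E) (s : ℂ) (a : ℝ) :
    ∫ t in Ioi (Real.exp a), (t : ℂ) ^ (s - 1) • g t
      = ∫ u in Ioi a, Complex.exp (s * u) • g (Real.exp u) := by
  rw [← Real.image_exp_Ioi, integral_image_eq_integral_abs_deriv_smul measurableSet_Ioi
    (fun u _ => (Real.hasDerivAt_exp u).hasDerivWithinAt) Real.exp_injective.injOn]
  simp_rw [abs_exp_smul_cpow_smul]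

lemma cpow_smul_indicator_Ioi (g : ℝ → E) (s : ℂ) (c : ℝ) :
    (fun t : ℝ => (t : ℂ) ^ (s - 1) • (Ioi c).indicator g t)
      = (Ioi c).indicator fun t : ℝ => (t : ℂ) ^ (s - 1) • g t :=
  funext fun t => (indicator_smul_apply (Ioi c) (fun t : ℝ => (t : ℂ) ^ (s - 1)) g t).symm

lemma mellinConvergent_indicator_Ioi_iff (g : ℝ → E) (s : ℂ) {c : ℝ} (hc : 0 ≤ c) :
    MellinConvergent ((Ioi c).indicator g) s
      ↔ IntegrableOn (fun t : ℝ => (t : ℂ) ^ (s - 1) • g t) (Ioi c) := by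
  rw [MellinConvergent, cpow_smul_indicator_Ioi, IntegrableOn,
    integrable_indicator_iff measurableSet_Ioi, IntegrableOn, IntegrableOn,
    Measure.restrict_restrict measurableSet_Ioi, Ioi_inter_Ioi, sup_eq_left.2 hc]

lemma mellin_indicator_Ioi (g : ℝ → E) (s : ℂ) {c : ℝ} (hc : 0 ≤ c) :
    mellin ((Ioi c).indicator g) s = ∫ t in Ioi c, (t : ℂ) ^ (s - 1) • g t := by
  rw [mellin, cpow_smul_indicator_Ioi, setIntegral_indicator measurableSet_Ioi,
    Ioi_inter_Ioi, sup_eq_right.2 hc]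

end

noncomputable def fractIoiOne : ℝ → ℂ := (Ioi 1).indicator fun x => ((Int.fract x : ℝ) : ℂ)

lemma norm_fractIoiOne_le (x : ℝ) : ‖fractIoiOne x‖ ≤ 1 := by
  by_cases hx : x ∈ Ioi (1 : ℝ)
  · rw [fractIoiOne, indicator_of_mem hx, Complex.norm_real,
      Real.norm_of_nonneg (Int.fract_nonneg x)]
    exact (Int.fract_lt_one x).le
  · simp [fractIoiOne, indicator_of_notMem hx]

lemma locallyIntegrable_fractIoiOne : LocallyIntegrable fractIoiOne :=
  (locallyIntegrable_const (1 : ℂ)).mono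
    (((Complex.measurable_ofReal.comp measurable_fract).indicator
      measurableSet_Ioi).aestronglyMeasurable : AEStronglyMeasurable fractIoiOne volume)
    (ae_of_all _ fun x => by simpa using norm_fractIoiOne_le x)

lemma fractIoiOne_isBigO_atTop : fractIoiOne =O[atTop] fun x : ℝ => x ^ (-(0 : ℝ)) := by
  simp_rw [neg_zero, Real.rpow_zero]
  exact isBigO_of_le' (c := 1) _ fun x => by simpa using norm_fractIoiOne_le x

lemma fractIoiOne_isBigO_nhdsGT_zero (b : ℝ) :
    fractIoiOne =O[𝓝[>] 0] fun x : ℝ => x ^ (-b) := by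
  refine EventuallyEq.trans_isBigO ?_ (isBigO_zero _ _)
  filter_upwards [Ioo_mem_nhdsGT one_pos] with x hx
  exact indicator_of_notMem (not_lt.2 hx.2.le) _

lemma mellinConvergent_fractIoiOne {s : ℂ} (hs : s.re < 0) : MellinConvergent fractIoiOne s :=
  mellinConvergent_of_isBigO_rpow (locallyIntegrable_fractIoiOne.locallyIntegrableOn _)
    fractIoiOne_isBigO_atTop hs (fractIoiOne_isBigO_nhdsGT_zero (s.re - 1)) (by linarith)

lemma differentiableAt_mellin_fractIoiOne {s : ℂ} (hs : s.re < 0) :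
    DifferentiableAt ℂ (mellin fractIoiOne) s :=
  mellin_differentiableAt_of_isBigO_rpow (locallyIntegrable_fractIoiOne.locallyIntegrableOn _)
    fractIoiOne_isBigO_atTop hs (fractIoiOne_isBigO_nhdsGT_zero (s.re - 1)) (by linarith)

lemma mellin_fractIoiOne (s : ℂ) :
    mellin fractIoiOne s = ∫ t : ℝ in Ioi 1, (t : ℂ) ^ (s - 1) • ((Int.fract t : ℝ) : ℂ) :=
  mellin_indicator_Ioi _ s zero_le_one

lemma integrableOn_cpow_smul_fract {s : ℂ} (hs : s.re < 0) :
    IntegrableOn (fun t : ℝ => (t : ℂ) ^ (s - 1) • ((Int.fract t : ℝ) : ℂ)) (Ioi 1) :=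
  (mellinConvergent_indicator_Ioi_iff _ s zero_le_one).1 (mellinConvergent_fractIoiOne hs)

lemma integrableOn_exp_mul_fract_exp {s : ℂ} (hs : 0 < s.re) :
    IntegrableOn (fun t : ℝ => Complex.exp (-s * t) * ((Int.fract (Real.exp t) : ℝ) : ℂ))
      (Ioi 0) := by
  have h := integrableOn_cpow_smul_Ioi_exp_iff (fun t : ℝ => ((Int.fract t : ℝ) : ℂ)) (-s) 0
  rw [Real.exp_zero] at h
  exact h.1 (integrableOn_cpow_smul_fract (by simpa using hs))

lemma integral_exp_mul_fract_exp (s : ℂ) :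
    ∫ t in Ioi (0 : ℝ), Complex.exp (-s * t) * ((Int.fract (Real.exp t) : ℝ) : ℂ)
      = mellin fractIoiOne (-s) := by
  have h := integral_cpow_smul_Ioi_exp (fun t : ℝ => ((Int.fract t : ℝ) : ℂ)) (-s) 0
  rw [Real.exp_zero] at h
  rw [mellin_fractIoiOne, h]
  rfl

lemma riemannZeta_eq_mul_integral_natFloor {s : ℂ} (hs : 1 < s.re) :
    riemannZeta s = s * ∫ t in Ioi (1 : ℝ), (⌊t⌋₊ : ℂ) * (t : ℂ) ^ (-(s + 1)) := by
  have hO : (fun n : ℕ => ∑ k ∈ Finset.Icc 1 n, ‖(1 : ℕ → ℂ) k‖) =O[atTop]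
      fun n : ℕ => (n : ℝ) ^ (1 : ℝ) := by
    simpa using isBigO_refl _ _
  rw [← LSeries_one_eq_riemannZeta hs, LSeries_eq_mul_integral' _ zero_le_one hs hO]
  simp

lemma integral_natFloor_mul_cpow {s : ℂ} (hs : 1 < s.re) :
    ∫ t in Ioi (1 : ℝ), (⌊t⌋₊ : ℂ) * (t : ℂ) ^ (-(s + 1))
      = 1 / (s - 1) - mellin fractIoiOne (-s) := by
  have hpow : IntegrableOn (fun t : ℝ => (t : ℂ) ^ (-s)) (Ioi 1) :=
    integrableOn_Ioi_cpow_of_lt (by simp; linarith) one_pos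
  have hfract := integrableOn_cpow_smul_fract (s := -s) (by simp; linarith)
  have hsplit : EqOn (fun t : ℝ => (⌊t⌋₊ : ℂ) * (t : ℂ) ^ (-(s + 1)))
      (fun t => (t : ℂ) ^ (-s) - (t : ℂ) ^ (-s - 1) • ((Int.fract t : ℝ) : ℂ)) (Ioi 1) := by
    intro t ht
    have ht0 : (t : ℂ) ≠ 0 := Complex.ofReal_ne_zero.2 (zero_lt_one.trans ht).ne'
    have hfloor : (⌊t⌋₊ : ℂ) = t - Int.fract t := by
      have : (⌊t⌋₊ : ℝ) = t - Int.fract t := by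
        rw [natCast_floor_eq_intCast_floor (zero_le_one.trans ht.le), ← Int.self_sub_floor]
        ring
      exact_mod_cast this
    simp only [hfloor, smul_eq_mul]
    rw [show -s = (-s - 1) + 1 by ring, Complex.cpow_add _ _ ht0, Complex.cpow_one]
    ring_nf
  rw [setIntegral_congr_fun measurableSet_Ioi hsplit, integral_sub hpow hfract,
    integral_Ioi_cpow_of_lt (by simp; linarith) one_pos, mellin_fractIoiOne,
    Complex.ofReal_one, Complex.one_cpow, show -s + 1 = -(s - 1) by ring, neg_div_neg_eq]

lemma riemannZeta_eq_mul_sub_mellin_of_one_lt_re {s : ℂ} (hs : 1 < s.re) :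
    riemannZeta s = s * (1 / (s - 1) - mellin fractIoiOne (-s)) := by
  rw [riemannZeta_eq_mul_integral_natFloor hs, integral_natFloor_mul_cpow hs]

lemma riemannZeta₀_eq_one_sub_mul_mellin {s : ℂ} (hs : 0 < s.re) :
    riemannZeta₀ s = 1 - s * mellin fractIoiOne (-s) := by
  have hU : IsOpen {z : ℂ | 0 < z.re} := isOpen_lt continuous_const Complex.continuous_re
  have hrhs : DifferentiableOn ℂ (fun z => 1 - z * mellin fractIoiOne (-z)) {z | 0 < z.re} :=
    fun z hz => (differentiableAt_const _).sub (differentiableAt_id.mul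
      ((differentiableAt_mellin_fractIoiOne (by simpa using hz)).comp z differentiableAt_id.neg))
      |>.differentiableWithinAt
  have heq : riemannZeta₀ =ᶠ[𝓝 2] fun z => 1 - z * mellin fractIoiOne (-z) := by
    filter_upwards [(isOpen_lt continuous_const Complex.continuous_re).mem_nhds
      (show (1 : ℝ) < (2 : ℂ).re by norm_num)] with z hz
    have hz1 : z - 1 ≠ 0 := fun h => by simp [sub_eq_zero.1 h] at hz
    rw [← sub_eq_iff_eq_add'.2 (riemannZeta_eq_inv_sub_add (sub_ne_zero.1 hz1)),
      riemannZeta_eq_mul_sub_mellin_of_one_lt_re hz]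
    field_simp
    ring
  have hlhs : AnalyticOnNhd ℂ riemannZeta₀ {z | 0 < z.re} :=
    differentiable_riemannZeta₀.differentiableOn.analyticOnNhd hU
  exact hlhs.eqOn_of_preconnected_of_eventuallyEq (hrhs.analyticOnNhd hU)
    (convex_halfSpace_re_gt 0).isPreconnected (by norm_num) heq hs

lemma riemannZeta_div_eq_sub_mellin {s : ℂ} (hs : 0 < s.re) (hs1 : s ≠ 1) :
    riemannZeta s / s = 1 / (s - 1) - mellin fractIoiOne (-s) := by
  have hs0 : s ≠ 0 := fun h => by simp [h] at hs
  have hs1' : s - 1 ≠ 0 := sub_ne_zero.2 hs1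
  rw [riemannZeta_eq_inv_sub_add hs1, riemannZeta₀_eq_one_sub_mul_mellin hs]
  field_simp
  ring

lemma exp_mul_ofReal_exp (s : ℂ) (t : ℝ) :
    Complex.exp (-s * t) * (Real.exp t : ℂ) = Complex.exp ((1 - s) * t) := by
  rw [Complex.ofReal_exp, ← Complex.exp_add]
  ring_nf

lemma integrableOn_exp_mul_ofReal_exp_Iio {s : ℂ} (hs : s.re < 1) :
    IntegrableOn (fun t : ℝ => Complex.exp (-s * t) * (Real.exp t : ℂ)) (Iio 0) := by
  simp_rw [exp_mul_ofReal_exp]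
  exact (integrableOn_Iic_iff_integrableOn_Iio (by simp)).1
    (integrableOn_exp_mul_complex_Iic (by simpa using hs) 0)

lemma integral_exp_mul_ofReal_exp_Iio {s : ℂ} (hs : s.re < 1) :
    ∫ t in Iio (0 : ℝ), Complex.exp (-s * t) * (Real.exp t : ℂ) = 1 / (1 - s) := by
  simp_rw [exp_mul_ofReal_exp]
  rw [← integral_Iic_eq_integral_Iio, integral_exp_mul_complex_Iic (by simpa using hs)]
  simp

theorem statement8 (s : ℂ) (h0 : 0 < s.re) (h1 : s.re < 1) :
    MeasureTheory.IntegrableOn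
      (fun t : ℝ => Complex.exp (-s * t) * ((Int.fract (Real.exp t) : ℝ) : ℂ)) (Set.Ioi 0) ∧
    MeasureTheory.IntegrableOn
      (fun t : ℝ => Complex.exp (-s * t) * (Real.exp t : ℂ)) (Set.Iio 0) ∧
    riemannZeta s / s =
      -(∫ t in Set.Ioi (0:ℝ), Complex.exp (-s * t) * ((Int.fract (Real.exp t) : ℝ) : ℂ))
      - ∫ t in Set.Iio (0:ℝ), Complex.exp (-s * t) * (Real.exp t : ℂ) := by
  have hs1 : s ≠ 1 := fun h => by simp [h] at h1
  refine ⟨integrableOn_exp_mul_fract_exp h0, integrableOn_exp_mul_ofReal_exp_Iio h1, ?_⟩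
  rw [riemannZeta_div_eq_sub_mellin h0 hs1, integral_exp_mul_fract_exp,
    integral_exp_mul_ofReal_exp_Iio h1, ← neg_sub s 1, div_neg]
  ring
end

section
/- Fix M > 0. For every s ∈ ℂ not lying on the trace of γ_M, the function ζ ↦ exp(exp(−ζ²))/(s−ζ) is integrable along γ_M (each of the three parametrized Lebesgue integrals defining the contour integral converges absolutely), and the function I(s) = (1/(2πi)) ∫_{γ_M} exp(exp(−ζ²))/(s−ζ) dζ is holomorphic on the open set ℂ minus the trace of γ_M. -/
/-!
Each of the three pieces of the contour integral is a Cauchy transform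
`s ↦ ∫ f t / (s - ζ t) ∂μ` of an integrable weight `f` carried by the closed trace of `γ_M`.
Such a transform is integrable and holomorphic at every `s` off the trace: `s` has positive
distance `δ` from it, and `‖f‖ / (δ/2)²` dominates the `s`-derivative near `s`.
On the branches `|σ| τ = π/2`, so `cos (2στ) = -1` and
`‖exp (exp (-ζ²))‖ = exp (-e^{τ² - σ²}) ≤ e^{σ²} e^{-τ²}` is integrable on `(M, ∞)`;
on the segment the weight is continuous on a compact interval.
-/

open MeasureTheory intervalIntegral Filter

/-- The contour integral of `g` along the clockwise contour `γ_M`, consisting of the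
right branch `{π/(2τ)+iτ : τ ≥ M}` traversed downward, the horizontal segment
`{σ+iM : |σ| ≤ π/(2M)}` traversed right to left, and the left branch
`{−π/(2τ)+iτ : τ ≥ M}` traversed upward. -/
noncomputable def gammaInt (M : ℝ) (g : ℂ → ℂ) : ℂ :=
  (∫ τ in Set.Ioi M, g (((-(Real.pi / (2 * τ)) : ℝ) : ℂ) + τ * Complex.I) *
      (((Real.pi / (2 * τ ^ 2) : ℝ) : ℂ) + Complex.I))
  - (∫ τ in Set.Ioi M, g (((Real.pi / (2 * τ) : ℝ) : ℂ) + τ * Complex.I) *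
      (Complex.I - ((Real.pi / (2 * τ ^ 2) : ℝ) : ℂ)))
  - ∫ σ in (-(Real.pi / (2 * M)))..(Real.pi / (2 * M)), g ((σ : ℂ) + M * Complex.I)

/-- Absolute convergence of the three parametrized Lebesgue integrals defining the
contour integral of `g` along `γ_M`. -/
def GammaIntegrable (M : ℝ) (g : ℂ → ℂ) : Prop :=
  MeasureTheory.IntegrableOn (fun τ : ℝ =>
    g (((-(Real.pi / (2 * τ)) : ℝ) : ℂ) + τ * Complex.I) *
      (((Real.pi / (2 * τ ^ 2) : ℝ) : ℂ) + Complex.I)) (Set.Ioi M) ∧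
  MeasureTheory.IntegrableOn (fun τ : ℝ =>
    g (((Real.pi / (2 * τ) : ℝ) : ℂ) + τ * Complex.I) *
      (Complex.I - ((Real.pi / (2 * τ ^ 2) : ℝ) : ℂ))) (Set.Ioi M) ∧
  IntervalIntegrable (fun σ : ℝ => g ((σ : ℂ) + M * Complex.I))
    MeasureTheory.volume (-(Real.pi / (2 * M))) (Real.pi / (2 * M))

/-- The trace (image) of the contour `γ_M`. -/
def gammaTrace (M : ℝ) : Set ℂ :=
  {ζ : ℂ | (M ≤ ζ.im ∧ |ζ.re| = Real.pi / (2 * ζ.im)) ∨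
    (ζ.im = M ∧ |ζ.re| ≤ Real.pi / (2 * M))}

/-- The open region `D_M` lying to the right of `γ_M` as it is traversed clockwise. -/
def DM (M : ℝ) : Set ℂ := {ζ : ℂ | M < ζ.im ∧ |ζ.re| < Real.pi / (2 * ζ.im)}

open Complex Set
open scoped Real

section CauchyTransform

variable {α : Type*} [MeasurableSpace α] {μ : Measure α} {f ζ : α → ℂ} {s : ℂ} {δ : ℝ}

lemma integrable_div_sub_of_le_norm_sub (hf : Integrable f μ) (hζ : AEStronglyMeasurable ζ μ)
    (hδ : 0 < δ) (hsep : ∀ᵐ t ∂μ, δ ≤ ‖s - ζ t‖) :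
    Integrable (fun t => f t / (s - ζ t)) μ := by
  refine (hf.norm.div_const δ).mono' (hf.1.div₀ (aestronglyMeasurable_const.sub hζ)) ?_
  filter_upwards [hsep] with t ht
  rw [norm_div]
  exact div_le_div_of_nonneg_left (norm_nonneg _) hδ ht

lemma hasDerivAt_integral_div_sub (hf : Integrable f μ) (hζ : AEStronglyMeasurable ζ μ)
    (hδ : 0 < δ) (hsep : ∀ᵐ t ∂μ, δ ≤ ‖s - ζ t‖) :
    HasDerivAt (fun x => ∫ t, f t / (x - ζ t) ∂μ) (∫ t, -(f t / (s - ζ t) ^ 2) ∂μ) s := by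
  have hnear : ∀ᵐ t ∂μ, ∀ x ∈ Metric.ball s (δ / 2), δ / 2 ≤ ‖x - ζ t‖ := by
    filter_upwards [hsep] with t ht x hx
    rw [Metric.mem_ball, dist_eq_norm, norm_sub_rev] at hx
    linarith [norm_sub_le_norm_sub_add_norm_sub s x (ζ t)]
  have hball := Metric.ball_mem_nhds s (half_pos hδ)
  refine (hasDerivAt_integral_of_dominated_loc_of_deriv_le
    (bound := fun t => ‖f t‖ / (δ / 2) ^ 2) hball ?_
    (F := fun x t => f t / (x - ζ t)) (F' := fun x t => -(f t / (x - ζ t) ^ 2))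
    (integrable_div_sub_of_le_norm_sub hf hζ hδ hsep) ?_ ?_ (hf.norm.div_const _) ?_).2
  · filter_upwards [hball] with x hx
    exact (integrable_div_sub_of_le_norm_sub hf hζ (half_pos hδ)
      (hnear.mono fun t ht => ht x hx)).1
  · exact (hf.1.div₀ ((aestronglyMeasurable_const.sub hζ).pow 2)).neg
  · filter_upwards [hnear] with t ht x hx
    rw [norm_neg, norm_div, norm_pow]
    gcongr
    exact ht x hx
  · filter_upwards [hnear] with t ht x hx
    have hx0 : x - ζ t ≠ 0 := norm_pos_iff.1 ((half_pos hδ).trans_le (ht x hx))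
    simpa only [div_eq_mul_inv, mul_neg] using
      ((hasDerivAt_inv hx0).comp_sub_const x (ζ t)).const_mul (f t)

lemma exists_pos_le_norm_sub_of_isClosed {E : Type*} [SeminormedAddCommGroup E] {K : Set E}
    (hK : IsClosed K) {x : E} (hx : x ∉ K) : ∃ δ > 0, ∀ z ∈ K, δ ≤ ‖x - z‖ := by
  obtain ⟨δ, hδ, hball⟩ := Metric.isOpen_iff.1 hK.isOpen_compl x hx
  refine ⟨δ, hδ, fun z hz => not_lt.1 fun h => hball ?_ hz⟩
  rwa [Metric.mem_ball, dist_eq_norm, norm_sub_rev]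

lemma integrable_and_differentiableAt_integral_div_sub {K : Set ℂ} (hK : IsClosed K)
    (hf : Integrable f μ) (hζ : AEStronglyMeasurable ζ μ) (hζK : ∀ᵐ t ∂μ, ζ t ∈ K)
    (hs : s ∉ K) :
    Integrable (fun t => f t / (s - ζ t)) μ ∧
      DifferentiableAt ℂ (fun x => ∫ t, f t / (x - ζ t) ∂μ) s := by
  obtain ⟨δ, hδ, hsep⟩ := exists_pos_le_norm_sub_of_isClosed hK hs
  have hsep' : ∀ᵐ t ∂μ, δ ≤ ‖s - ζ t‖ := hζK.mono fun t ht => hsep _ ht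
  exact ⟨integrable_div_sub_of_le_norm_sub hf hζ hδ hsep',
    (hasDerivAt_integral_div_sub hf hζ hδ hsep').differentiableAt⟩

end CauchyTransform

lemma norm_exp_exp_neg_sq (σ τ : ℝ) :
    ‖exp (exp (-((σ : ℂ) + τ * I) ^ 2))‖ =
      Real.exp (Real.exp (τ ^ 2 - σ ^ 2) * Real.cos (2 * σ * τ)) := by
  have hre : (-((σ : ℂ) + τ * I) ^ 2).re = τ ^ 2 - σ ^ 2 := by simp [sq]
  have him : (-((σ : ℂ) + τ * I) ^ 2).im = -(2 * σ * τ) := by simp [sq]; ring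
  rw [norm_exp, exp_re, hre, him, Real.cos_neg]

lemma norm_exp_exp_neg_sq_of_abs_eq {σ τ : ℝ} (hτ : 0 < τ) (hσ : |σ| = π / (2 * τ)) :
    ‖exp (exp (-((σ : ℂ) + τ * I) ^ 2))‖ = Real.exp (-Real.exp (τ ^ 2 - σ ^ 2)) := by
  have hcos : Real.cos (2 * σ * τ) = -1 := by
    rw [← Real.cos_abs, abs_mul, abs_mul, hσ, abs_two, abs_of_pos hτ]
    field_simp
    exact Real.cos_pi
  rw [norm_exp_exp_neg_sq, hcos, mul_neg_one]

lemma isClosed_gammaTrace {M : ℝ} (hM : 0 < M) : IsClosed (gammaTrace M) := by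
  have hset : gammaTrace M = {ζ : ℂ | M ≤ ζ.im ∧ |ζ.re| * (2 * ζ.im) = π} ∪
      {ζ : ℂ | ζ.im = M ∧ |ζ.re| ≤ π / (2 * M)} := by
    ext ζ
    refine or_congr_left (and_congr_right fun h => ?_)
    have : 0 < ζ.im := hM.trans_le h
    rw [eq_div_iff (by positivity)]
  have hre : Continuous fun ζ : ℂ => |ζ.re| := by fun_prop
  rw [hset]
  exact ((isClosed_le continuous_const continuous_im).inter
      (isClosed_eq (hre.mul (continuous_const.mul continuous_im)) continuous_const)).union
    ((isClosed_eq continuous_im continuous_const).inter (isClosed_le hre continuous_const))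

lemma ofReal_add_mul_I_mem_gammaTrace_of_abs_eq {M σ τ : ℝ} (hτ : M ≤ τ)
    (hσ : |σ| = π / (2 * τ)) : (σ : ℂ) + τ * I ∈ gammaTrace M :=
  Or.inl ⟨by simpa using hτ, by simpa using hσ⟩

lemma ofReal_add_mul_I_mem_gammaTrace_of_abs_le {M σ : ℝ} (hσ : |σ| ≤ π / (2 * M)) :
    (σ : ℂ) + M * I ∈ gammaTrace M :=
  Or.inr ⟨by simp, by simpa using hσ⟩

lemma integrableOn_exp_exp_neg_sq_branch {M : ℝ} (hM : 0 < M) {σ : ℝ → ℝ} (hσm : Measurable σ)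
    (hσ : ∀ τ ∈ Ioi M, |σ τ| = π / (2 * τ)) :
    IntegrableOn (fun τ : ℝ => exp (exp (-((σ τ : ℂ) + τ * I) ^ 2))) (Ioi M) := by
  have hgauss : Integrable fun τ : ℝ => Real.exp (-τ ^ 2) := by
    simpa using integrable_exp_neg_mul_sq one_pos
  refine ((hgauss.const_mul (Real.exp ((π / (2 * M)) ^ 2))).integrableOn).mono'
    (by fun_prop : Measurable _).aestronglyMeasurable
    (ae_restrict_of_forall_mem measurableSet_Ioi fun τ hτ => ?_)
  have hτ0 : 0 < τ := hM.trans hτ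
  have hσ_sq : σ τ ^ 2 ≤ (π / (2 * M)) ^ 2 := by
    rw [← sq_abs, hσ τ hτ]
    gcongr
    exact hτ.le
  rw [norm_exp_exp_neg_sq_of_abs_eq hτ0 (hσ τ hτ), ← Real.exp_add]
  gcongr
  linarith [Real.add_one_le_exp (τ ^ 2 - σ τ ^ 2)]

lemma integrableOn_and_differentiableAt_branch {M : ℝ} (hM : 0 < M) {σ : ℝ → ℝ}
    (hσm : Measurable σ) (hσ : ∀ τ ∈ Ioi M, |σ τ| = π / (2 * τ)) {m : ℝ → ℂ}
    (hm : Measurable m) {K : ℝ} (hmK : ∀ τ ∈ Ioi M, ‖m τ‖ ≤ K) {s : ℂ}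
    (hs : s ∉ gammaTrace M) :
    IntegrableOn (fun τ : ℝ => exp (exp (-((σ τ : ℂ) + τ * I) ^ 2)) /
      (s - ((σ τ : ℂ) + τ * I)) * m τ) (Ioi M) ∧
    DifferentiableAt ℂ (fun x => ∫ τ in Ioi M, exp (exp (-((σ τ : ℂ) + τ * I) ^ 2)) /
      (x - ((σ τ : ℂ) + τ * I)) * m τ) s := by
  simp_rw [div_mul_eq_mul_div]
  exact integrable_and_differentiableAt_integral_div_sub (isClosed_gammaTrace hM)
    ((integrableOn_exp_exp_neg_sq_branch hM hσm hσ).mul_bdd hm.aestronglyMeasurable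
      (ae_restrict_of_forall_mem measurableSet_Ioi hmK))
    (by fun_prop : Measurable _).aestronglyMeasurable
    (ae_restrict_of_forall_mem measurableSet_Ioi fun τ hτ =>
      ofReal_add_mul_I_mem_gammaTrace_of_abs_eq hτ.le (hσ τ hτ)) hs

lemma intervalIntegrable_and_differentiableAt_segment {M : ℝ} (hM : 0 < M) {s : ℂ}
    (hs : s ∉ gammaTrace M) :
    IntervalIntegrable (fun σ : ℝ => exp (exp (-((σ : ℂ) + M * I) ^ 2)) /
      (s - ((σ : ℂ) + M * I))) volume (-(π / (2 * M))) (π / (2 * M)) ∧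
    DifferentiableAt ℂ (fun x => ∫ σ in (-(π / (2 * M)))..(π / (2 * M)),
      exp (exp (-((σ : ℂ) + M * I) ^ 2)) / (x - ((σ : ℂ) + M * I))) s := by
  have hab : -(π / (2 * M)) ≤ π / (2 * M) := neg_le_self (by positivity)
  rw [intervalIntegrable_iff_integrableOn_Ioc_of_le hab]
  simp_rw [intervalIntegral.integral_of_le hab]
  exact integrable_and_differentiableAt_integral_div_sub (isClosed_gammaTrace hM)
    (by fun_prop : Continuous _).integrableOn_Ioc
    (by fun_prop : Continuous _).aestronglyMeasurable
    (ae_restrict_of_forall_mem measurableSet_Ioc fun σ hσ =>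
      ofReal_add_mul_I_mem_gammaTrace_of_abs_le (abs_le.2 ⟨hσ.1.le, hσ.2⟩)) hs

theorem statement13 (M : ℝ) (hM : 0 < M) :
    (∀ s : ℂ, s ∉ gammaTrace M →
      GammaIntegrable M (fun ζ : ℂ => Complex.exp (Complex.exp (-ζ ^ 2)) / (s - ζ))) ∧
    DifferentiableOn ℂ
      (fun s : ℂ => (1 / (2 * Real.pi * Complex.I)) *
        gammaInt M (fun ζ : ℂ => Complex.exp (Complex.exp (-ζ ^ 2)) / (s - ζ)))
      (gammaTrace M)ᶜ := by
  have hweight : ∀ τ ∈ Ioi M, ‖((π / (2 * τ ^ 2) : ℝ) : ℂ)‖ + ‖I‖ ≤ π / (2 * M ^ 2) + 1 := by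
    intro τ hτ
    have hτ0 : 0 < τ := hM.trans hτ
    rw [norm_I, norm_real, Real.norm_of_nonneg (by positivity)]
    gcongr
    exact hτ.le
  have hleft (s : ℂ) (hs : s ∉ gammaTrace M) := integrableOn_and_differentiableAt_branch hM
    (σ := fun τ => -(π / (2 * τ))) (by fun_prop)
    (fun τ hτ => by have := hM.trans hτ; rw [abs_neg, abs_of_pos (by positivity)])
    (m := fun τ => ((π / (2 * τ ^ 2) : ℝ) : ℂ) + I) (by fun_prop)
    (fun τ hτ => (norm_add_le _ _).trans (hweight τ hτ)) hs
  have hright (s : ℂ) (hs : s ∉ gammaTrace M) := integrableOn_and_differentiableAt_branch hM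
    (σ := fun τ => π / (2 * τ)) (by fun_prop)
    (fun τ hτ => by have := hM.trans hτ; rw [abs_of_pos (by positivity)])
    (m := fun τ => I - ((π / (2 * τ ^ 2) : ℝ) : ℂ)) (by fun_prop)
    (fun τ hτ => (norm_sub_rev _ _).le.trans ((norm_sub_le _ _).trans (hweight τ hτ))) hs
  have hseg (s : ℂ) (hs : s ∉ gammaTrace M) :=
    intervalIntegrable_and_differentiableAt_segment hM hs
  refine ⟨fun s hs => ⟨(hleft s hs).1, (hright s hs).1, (hseg s hs).1⟩, fun s hs => ?_⟩
  exact ((((hleft s hs).2.sub (hright s hs).2).sub (hseg s hs).2).const_mul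
    _).differentiableWithinAt
end

section
/- Fix M > 0 and let I(s) = (1/(2πi)) ∫_{γ_M} exp(exp(−ζ²))/(s−ζ) dζ, and let F be the entire function with F(s) = I(s) off closure(D_M) and F(s) = exp(exp(−s²)) + I(s) on D_M. Then there exist constants C > 0 and Y > M such that |I(iy)| ≤ C·y for all y ≥ Y, and consequently F satisfies the growth condition: for every a > 0 and every ε > 0, limsup_{y→+∞} |F(iy)| / exp(a·e^{y/ε}) = +∞ (equivalently, for every c > 0 and every y₀ there exists y > y₀ with |F(iy)| > c·exp(a·e^{y/ε})). -/
open MeasureTheory intervalIntegral Filter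

/-!
On the two branches of `γ_M` one has `|2 Re ζ · Im ζ| = π`, so `exp (-ζ²)` is the negative
real number `-exp (Im² ζ - Re² ζ)` and `exp (exp (-ζ²))` is bounded by `exp (Re² ζ - Im² ζ)`,
a Gaussian in `Im ζ`. Since the branch at height `τ` stays at distance `π/(2τ)` from the
imaginary axis, the Cauchy integral `I(iy)` is bounded uniformly in `y ≥ M + 1`. On `D_M` the
function `F(iy)` is then `exp (exp y²) + O(1)`, which beats `c · exp (a · exp (y/ε))`.
-/

section

open Complex

lemma norm_exp_exp_le (w : ℂ) : ‖exp (exp w)‖ ≤ Real.exp (Real.exp w.re) := by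
  rw [norm_exp, ← norm_exp w]
  exact Real.exp_le_exp.2 (re_le_norm _)

lemma re_exp_neg_sq_of_abs_two_mul_re_mul_im {z : ℂ} (h : |2 * z.re * z.im| = Real.pi) :
    (exp (-z ^ 2)).re = -Real.exp (z.im ^ 2 - z.re ^ 2) := by
  have hre : (-z ^ 2).re = z.im ^ 2 - z.re ^ 2 := by simp [sq]
  have him : (-z ^ 2).im = -(2 * z.re * z.im) := by simp [sq]; ring
  rw [exp_re, hre, him, Real.cos_neg, ← Real.cos_abs, h, Real.cos_pi, mul_neg_one]

lemma norm_exp_exp_neg_sq_le {z : ℂ} (h : |2 * z.re * z.im| = Real.pi) :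
    ‖exp (exp (-z ^ 2))‖ ≤ Real.exp (z.re ^ 2 - z.im ^ 2) := by
  rw [norm_exp, re_exp_neg_sq_of_abs_two_mul_re_mul_im h]
  have := Real.add_one_le_exp (z.im ^ 2 - z.re ^ 2)
  exact Real.exp_le_exp.2 (by linarith)

/-- `Real.pi / (2 * τ ^ 2) + 1` bounds the speed `‖dζ/dτ‖` of both branches of `γ_M`. -/
lemma norm_gammaInt_le {M K : ℝ} {g : ℂ → ℂ} {B : ℝ → ℝ} (hM : 0 < M)
    (hB : IntegrableOn B (Set.Ioi M))
    (hbranch : ∀ τ > M, ∀ σ : ℝ, |σ| = Real.pi / (2 * τ) →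
      ‖g (σ + τ * I)‖ * (Real.pi / (2 * τ ^ 2) + 1) ≤ B τ)
    (hseg : ∀ σ : ℝ, |σ| ≤ Real.pi / (2 * M) → ‖g (σ + M * I)‖ ≤ K) :
    ‖gammaInt M g‖ ≤ 2 * (∫ τ in Set.Ioi M, B τ) + K * (Real.pi / M) := by
  have hbranch_int : ∀ σ : ℝ → ℝ, (∀ τ > M, |σ τ| = Real.pi / (2 * τ)) →
      ∀ m : ℝ → ℂ, (∀ τ, ‖m τ‖ ≤ Real.pi / (2 * τ ^ 2) + 1) →
      ‖∫ τ in Set.Ioi M, g (σ τ + τ * I) * m τ‖ ≤ ∫ τ in Set.Ioi M, B τ := by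
    intro σ hσ m hm
    refine norm_integral_le_of_norm_le hB ((ae_restrict_iff' measurableSet_Ioi).2
      (Eventually.of_forall fun τ hτ => ?_))
    rw [norm_mul]
    exact (mul_le_mul_of_nonneg_left (hm τ) (norm_nonneg _)).trans (hbranch τ hτ _ (hσ τ hτ))
  have hspeed : ∀ τ : ℝ, 0 ≤ Real.pi / (2 * τ ^ 2) := fun τ => by positivity
  have hleft := hbranch_int (fun τ => -(Real.pi / (2 * τ)))
    (fun τ hτ => by rw [abs_neg, abs_of_nonneg (by have := hM.trans hτ; positivity)])
    (fun τ => ((Real.pi / (2 * τ ^ 2) : ℝ) : ℂ) + I) (fun τ => by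
      refine (norm_add_le _ _).trans ?_
      rw [norm_real, Real.norm_of_nonneg (hspeed τ), norm_I])
  have hright := hbranch_int (fun τ => Real.pi / (2 * τ))
    (fun τ hτ => abs_of_nonneg (by have := hM.trans hτ; positivity))
    (fun τ => I - ((Real.pi / (2 * τ ^ 2) : ℝ) : ℂ)) (fun τ => by
      refine (norm_sub_le _ _).trans ?_
      rw [norm_real, Real.norm_of_nonneg (hspeed τ), norm_I, add_comm])
  have hhalf : 0 < Real.pi / (2 * M) := by positivity
  have hsegment := intervalIntegral.norm_integral_le_of_norm_le_const
    (a := -(Real.pi / (2 * M))) (b := Real.pi / (2 * M))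
    (f := fun σ : ℝ => g (σ + M * I)) (C := K) fun σ hσ => by
      rw [Set.uIoc_of_le (by linarith)] at hσ
      exact hseg σ (abs_le.2 ⟨hσ.1.le, hσ.2⟩)
  have hlength : |Real.pi / (2 * M) - -(Real.pi / (2 * M))| = Real.pi / M := by
    rw [sub_neg_eq_add, abs_of_nonneg (by positivity)]
    field_simp; ring
  rw [hlength] at hsegment
  rw [gammaInt]
  refine ((norm_sub_le _ _).trans (add_le_add_left (norm_sub_le _ _) _)).trans ?_
  linarith

lemma norm_exp_exp_div_mul_le_of_mem_branch {M τ σ : ℝ} {s : ℂ} (hM : 0 < M) (hτ : M < τ)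
    (hσ : |σ| = Real.pi / (2 * τ)) (hs : s.re = 0) :
    ‖exp (exp (-(σ + τ * I) ^ 2)) / (s - (σ + τ * I))‖ * (Real.pi / (2 * τ ^ 2) + 1)
      ≤ Real.exp ((Real.pi / (2 * M)) ^ 2) * (2 / Real.pi) * (Real.pi / (2 * M ^ 2) + 1)
        * (τ * Real.exp (-τ ^ 2)) := by
  have hτ0 : 0 < τ := hM.trans hτ
  have hre : (σ + τ * I : ℂ).re = σ := by simp
  have him : (σ + τ * I : ℂ).im = τ := by simp
  have hnum : ‖exp (exp (-(σ + τ * I) ^ 2))‖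
      ≤ Real.exp ((Real.pi / (2 * M)) ^ 2) * Real.exp (-τ ^ 2) := by
    have hσ_sq : σ ^ 2 ≤ (Real.pi / (2 * M)) ^ 2 := by
      rw [← sq_abs, hσ]; gcongr
    refine (norm_exp_exp_neg_sq_le ?_).trans ?_
    · rw [hre, him, abs_mul, abs_mul, hσ, abs_of_pos hτ0, abs_two]
      field_simp
    · rw [hre, him, ← Real.exp_add]
      exact Real.exp_le_exp.2 (by linarith)
  have hden : Real.pi / (2 * τ) ≤ ‖s - (σ + τ * I)‖ := by
    have hre' : (s - (σ + τ * I)).re = -σ := by simp [hs]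
    rw [← hσ, ← abs_neg, ← hre']
    exact abs_re_le_norm _
  have hspeed : Real.pi / (2 * τ ^ 2) + 1 ≤ Real.pi / (2 * M ^ 2) + 1 := by gcongr
  rw [norm_div]
  calc ‖exp (exp (-(σ + τ * I) ^ 2))‖ / ‖s - (σ + τ * I)‖ * (Real.pi / (2 * τ ^ 2) + 1)
      ≤ Real.exp ((Real.pi / (2 * M)) ^ 2) * Real.exp (-τ ^ 2) / (Real.pi / (2 * τ))
        * (Real.pi / (2 * M ^ 2) + 1) := by gcongr
    _ = _ := by field_simp

lemma norm_exp_exp_div_le_of_mem_segment (M σ : ℝ) {s : ℂ} (hs : M + 1 ≤ s.im) :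
    ‖exp (exp (-(σ + M * I) ^ 2)) / (s - (σ + M * I))‖ ≤ Real.exp (Real.exp (M ^ 2)) := by
  have hnum : ‖exp (exp (-(σ + M * I) ^ 2))‖ ≤ Real.exp (Real.exp (M ^ 2)) := by
    refine (norm_exp_exp_le _).trans (Real.exp_le_exp.2 (Real.exp_le_exp.2 ?_))
    simp only [neg_re, sq, mul_re, add_re, ofReal_re, I_re, I_im, ofReal_im, add_im, mul_im]
    nlinarith [sq_nonneg σ]
  have hden : 1 ≤ ‖s - (σ + M * I)‖ := by
    have him : (s - (σ + M * I)).im = s.im - M := by simp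
    refine le_trans ?_ (abs_im_le_norm _)
    rw [him, abs_of_nonneg (by linarith)]
    linarith
  rw [norm_div]
  exact (div_le_self (norm_nonneg _) hden).trans hnum

lemma exists_norm_cauchyIntegral_le {M : ℝ} (hM : 0 < M) : ∃ C : ℝ, ∀ s : ℂ, s.re = 0 →
    M + 1 ≤ s.im → ‖(1 / (2 * Real.pi * I)) *
      gammaInt M (fun ζ : ℂ => exp (exp (-ζ ^ 2)) / (s - ζ))‖ ≤ C := by
  set A := Real.exp ((Real.pi / (2 * M)) ^ 2) * (2 / Real.pi) * (Real.pi / (2 * M ^ 2) + 1)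
  have hB : IntegrableOn (fun τ : ℝ => A * (τ * Real.exp (-τ ^ 2))) (Set.Ioi M) := by
    have := (integrable_mul_exp_neg_mul_sq one_pos).integrableOn (s := Set.Ioi M)
    simpa [IntegrableOn] using this.const_mul A
  refine ⟨‖1 / (2 * Real.pi * I)‖ * (2 * (∫ τ in Set.Ioi M, A * (τ * Real.exp (-τ ^ 2)))
    + Real.exp (Real.exp (M ^ 2)) * (Real.pi / M)), fun s hs_re hs_im => ?_⟩
  rw [norm_mul]
  gcongr
  exact norm_gammaInt_le hM hB
    (fun τ hτ σ hσ => norm_exp_exp_div_mul_le_of_mem_branch hM hτ hσ hs_re)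
    (fun σ _ => norm_exp_exp_div_le_of_mem_segment M σ hs_im)

lemma ofReal_mul_I_mem_DM {M y : ℝ} (hM : 0 < M) (hy : M < y) : (y : ℂ) * I ∈ DM M := by
  have hy0 : 0 < y := hM.trans hy
  simp only [DM, Set.mem_ofPred_eq, mul_im, mul_re, ofReal_re, ofReal_im, I_re, I_im]
  exact ⟨by linarith, by simp; positivity⟩

end

lemma tendsto_exp_sub_mul_exp {α : Type*} {l : Filter α} {f g : α → ℝ} (c : ℝ)
    (hf : Tendsto f l atTop) (hgf : Tendsto (fun x => g x - f x) l atTop) :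
    Tendsto (fun x => Real.exp (g x) - c * Real.exp (f x)) l atTop := by
  have hfactor : (fun x => Real.exp (g x) - c * Real.exp (f x)) =
      fun x => Real.exp (f x) * (Real.exp (g x - f x) - c) := by
    funext x; rw [Real.exp_sub]; field_simp
  rw [hfactor]
  exact (Real.tendsto_exp_atTop.comp hf).atTop_mul_atTop₀
    (tendsto_atTop_add_const_right _ (-c) (Real.tendsto_exp_atTop.comp hgf))

lemma tendsto_exp_exp_sq_sub {a ε : ℝ} (c : ℝ) (ha : 0 < a) (hε : 0 < ε) :
    Tendsto (fun y => Real.exp (Real.exp (y ^ 2)) - c * Real.exp (a * Real.exp (y / ε)))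
      atTop atTop := by
  have hlin : Tendsto (fun y : ℝ => y / ε) atTop atTop := tendsto_id.atTop_div_const hε
  have hquad : Tendsto (fun y : ℝ => y ^ 2 - y / ε) atTop atTop := by
    have := tendsto_id.atTop_mul_atTop₀ (tendsto_atTop_add_const_right _ (-ε⁻¹) tendsto_id)
    refine this.congr fun y => ?_
    simp only [id]; ring
  exact tendsto_exp_sub_mul_exp c ((Real.tendsto_exp_atTop.comp hlin).const_mul_atTop ha)
    (tendsto_exp_sub_mul_exp a hlin hquad)

theorem statement15_general (M : ℝ) (hM : 0 < M) (F : ℂ → ℂ)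
    (hFon : ∀ s ∈ DM M,
      F s = Complex.exp (Complex.exp (-s ^ 2)) + (1 / (2 * Real.pi * Complex.I)) *
        gammaInt M (fun ζ : ℂ => Complex.exp (Complex.exp (-ζ ^ 2)) / (s - ζ))) :
    (∃ C : ℝ, 0 < C ∧ ∃ Y : ℝ, M < Y ∧ ∀ y : ℝ, Y ≤ y →
      ‖((1 / (2 * Real.pi * Complex.I)) *
        gammaInt M (fun ζ : ℂ => Complex.exp (Complex.exp (-ζ ^ 2)) / ((y : ℂ) * Complex.I - ζ)))‖
        ≤ C * y) ∧
    ∀ a ε c : ℝ, 0 < a → 0 < ε → 0 < c → ∀ y₀ : ℝ, ∃ y : ℝ, y₀ < y ∧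
      c * Real.exp (a * Real.exp (y / ε)) < ‖F ((y : ℂ) * Complex.I)‖ := by
  obtain ⟨C, hC⟩ := exists_norm_cauchyIntegral_le hM
  have hI : ∀ y : ℝ, M + 1 ≤ y → ‖(1 / (2 * Real.pi * Complex.I)) *
      gammaInt M (fun ζ : ℂ => Complex.exp (Complex.exp (-ζ ^ 2)) / ((y : ℂ) * Complex.I - ζ))‖
      ≤ C :=
    fun y hy => hC _ (by simp) (by simpa using hy)
  refine ⟨⟨max C 1, by positivity, M + 1, by linarith, fun y hy => (hI y hy).trans ?_⟩, ?_⟩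
  · exact (le_max_left _ _).trans (le_mul_of_one_le_right (by positivity) (by linarith))
  intro a ε c ha hε hc y₀
  obtain ⟨y, hy₀, hyM, hgrowth⟩ := ((eventually_gt_atTop y₀).and
    ((eventually_ge_atTop (M + 1)).and
      ((tendsto_exp_exp_sq_sub c ha hε).eventually_gt_atTop C))).exists
  refine ⟨y, hy₀, ?_⟩
  have hsq : Complex.exp (Complex.exp (-((y : ℂ) * Complex.I) ^ 2))
      = (Real.exp (Real.exp (y ^ 2)) : ℂ) := by
    rw [mul_pow, Complex.I_sq, mul_neg_one, neg_neg]; push_cast; rfl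
  rw [hFon _ (ofReal_mul_I_mem_DM hM (by linarith)), hsq]
  refine lt_of_lt_of_le ?_ (norm_sub_le_norm_add _ _)
  rw [Complex.norm_real, Real.norm_of_nonneg (Real.exp_pos _).le]
  linarith [hI y hyM]

theorem statement15 (M : ℝ) (hM : 0 < M) (F : ℂ → ℂ) (hF : Differentiable ℂ F)
    (hFoff : ∀ s : ℂ, s ∉ closure (DM M) →
      F s = (1 / (2 * Real.pi * Complex.I)) *
        gammaInt M (fun ζ : ℂ => Complex.exp (Complex.exp (-ζ ^ 2)) / (s - ζ)))
    (hFon : ∀ s ∈ DM M,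
      F s = Complex.exp (Complex.exp (-s ^ 2)) + (1 / (2 * Real.pi * Complex.I)) *
        gammaInt M (fun ζ : ℂ => Complex.exp (Complex.exp (-ζ ^ 2)) / (s - ζ))) :
    (∃ C : ℝ, 0 < C ∧ ∃ Y : ℝ, M < Y ∧ ∀ y : ℝ, Y ≤ y →
      ‖((1 / (2 * Real.pi * Complex.I)) *
        gammaInt M (fun ζ : ℂ => Complex.exp (Complex.exp (-ζ ^ 2)) / ((y : ℂ) * Complex.I - ζ)))‖
        ≤ C * y) ∧
    ∀ a ε c : ℝ, 0 < a → 0 < ε → 0 < c → ∀ y₀ : ℝ, ∃ y : ℝ, y₀ < y ∧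
      c * Real.exp (a * Real.exp (y / ε)) < ‖F ((y : ℂ) * Complex.I)‖ :=
  statement15_general M hM F hFon
end

section
/- Fix M > 0. The function f(t) = (1/(2πi)) ∫_{γ_M} exp(exp(−ζ²))·e^{ζ t} dζ is well defined for every t ∈ ℝ (the contour integral converges absolutely), is independent of the choice of M, and is infinitely differentiable on ℝ. -/
open MeasureTheory intervalIntegral Filter

namespace Stmt16


noncomputable def gg (t : ℝ) (ζ : ℂ) : ℂ :=
  Complex.exp (Complex.exp (-ζ ^ 2)) * Complex.exp (ζ * t)

noncomputable def br (ε τ : ℝ) : ℂ :=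
  ((ε * (Real.pi / (2 * τ)) : ℝ) : ℂ) + τ * Complex.I

noncomputable def dbr (ε τ : ℝ) : ℂ :=
  Complex.I - ((ε * (Real.pi / (2 * τ ^ 2)) : ℝ) : ℂ)

noncomputable def FB (ε : ℝ) (n : ℕ) (z : ℂ) (τ : ℝ) : ℂ :=
  Complex.exp (Complex.exp (-(br ε τ) ^ 2)) * (br ε τ) ^ n *
    Complex.exp (br ε τ * z) * dbr ε τ

noncomputable def FH (M : ℝ) (n : ℕ) (z : ℂ) (σ : ℝ) : ℂ :=
  Complex.exp (Complex.exp (-((σ : ℂ) + M * Complex.I) ^ 2)) *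
    ((σ : ℂ) + M * Complex.I) ^ n *
    Complex.exp (((σ : ℂ) + M * Complex.I) * z)

-- norm of exp(exp(-ζ^2)) on a branch
lemma norm_exp_exp_branch {σ τ : ℝ} (h : 2 * σ * τ = Real.pi ∨ 2 * σ * τ = -Real.pi) :
    ‖Complex.exp (Complex.exp (-((σ : ℂ) + τ * Complex.I) ^ 2))‖
      = Real.exp (-Real.exp (τ ^ 2 - σ ^ 2)) := by
  have hz : -((σ : ℂ) + τ * Complex.I) ^ 2
      = ((τ ^ 2 - σ ^ 2 : ℝ) : ℂ) + ((-(2 * σ * τ) : ℝ) : ℂ) * Complex.I := by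
    push_cast
    ring_nf
    simp [Complex.I_sq]
  have hre : (Complex.exp (-((σ : ℂ) + τ * Complex.I) ^ 2)).re
      = -Real.exp (τ ^ 2 - σ ^ 2) := by
    rw [hz]
    rw [show ((τ ^ 2 - σ ^ 2 : ℝ) : ℂ) + ((-(2 * σ * τ) : ℝ) : ℂ) * Complex.I
        = Complex.mk (τ ^ 2 - σ ^ 2) (-(2 * σ * τ)) by
      simp [Complex.ext_iff, ← Complex.ofReal_pow]]
    rw [Complex.exp_re]
    rcases h with h | h <;> simp [h, Real.cos_pi]
  rw [Complex.norm_exp, hre]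



noncomputable def K (M T : ℝ) (n : ℕ) : ℝ :=
  Real.exp (Real.pi ^ 2 / (4 * M ^ 2)) * (1 + Real.pi / (2 * M ^ 2)) ^ n *
    Real.exp (Real.pi / (2 * M) * T) * (1 + Real.pi / (2 * M ^ 2))

lemma contOn_br (ε : ℝ) : ContinuousOn (br ε) (Set.Ioi 0) := by
  unfold br
  apply ContinuousOn.add
  · exact Complex.continuous_ofReal.comp_continuousOn
      (continuousOn_const.mul (continuousOn_const.div
        (continuous_const.mul continuous_id).continuousOn
        (fun x hx => by have : (0:ℝ) < x := hx; positivity)))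
  · exact ((Complex.continuous_ofReal.mul continuous_const).continuousOn)

lemma contOn_dbr (ε : ℝ) : ContinuousOn (dbr ε) (Set.Ioi 0) := by
  unfold dbr
  apply ContinuousOn.sub continuousOn_const
  exact Complex.continuous_ofReal.comp_continuousOn
      (continuousOn_const.mul (continuousOn_const.div
        (continuous_const.mul (continuous_pow 2)).continuousOn
        (fun x hx => by have : (0:ℝ) < x := hx; positivity)))

lemma contOn_FB (ε : ℝ) (n : ℕ) (z : ℂ) : ContinuousOn (FB ε n z) (Set.Ioi 0) := by
  unfold FB
  have hb := contOn_br ε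
  exact (((Complex.continuous_exp.comp_continuousOn
      (Complex.continuous_exp.comp_continuousOn ((hb.pow 2).neg))).mul (hb.pow n)).mul
      (Complex.continuous_exp.comp_continuousOn (hb.mul continuousOn_const))).mul (contOn_dbr ε)

lemma FB_norm_le {M : ℝ} (hM : 0 < M) (T : ℝ) (n : ℕ) {ε : ℝ} (hε : ε = 1 ∨ ε = -1)
    {τ : ℝ} (hτ : τ ∈ Set.Ioi M) {z : ℂ} (hz : ‖z‖ ≤ T) :
    ‖FB ε n z τ‖ ≤ K M T n * (τ ^ n * (Real.exp (T * τ) * Real.exp (-τ ^ 2))) := by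
  have hτM : M < τ := hτ
  have hτ0 : 0 < τ := hM.trans hτM
  have hT0 : 0 ≤ T := (norm_nonneg z).trans hz
  set σ : ℝ := ε * (Real.pi / (2 * τ)) with hσ
  have hσsq : σ ^ 2 = Real.pi ^ 2 / (4 * τ ^ 2) := by
    rcases hε with h | h <;> rw [hσ, h] <;> field_simp <;> ring
  have h2στ : 2 * σ * τ = Real.pi ∨ 2 * σ * τ = -Real.pi := by
    rcases hε with h | h
    · left; rw [hσ, h]; field_simp
    · right; rw [hσ, h]; field_simp
  have hσabs : |σ| ≤ Real.pi / (2 * M) := by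
    rcases hε with h | h <;>
    · rw [hσ, h]
      simp only [one_mul, neg_mul, abs_neg]
      rw [abs_of_pos (by positivity : (0:ℝ) < Real.pi / (2 * τ))]
      apply div_le_div_of_nonneg_left Real.pi_pos.le (by positivity)
      linarith
  have h1 : ‖Complex.exp (Complex.exp (-(br ε τ) ^ 2))‖
      ≤ Real.exp (Real.pi ^ 2 / (4 * M ^ 2)) * Real.exp (-τ ^ 2) := by
    rw [show br ε τ = (σ : ℂ) + τ * Complex.I from rfl, norm_exp_exp_branch h2στ,
      ← Real.exp_add]
    apply Real.exp_le_exp.2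
    have hx : τ ^ 2 - σ ^ 2 ≤ Real.exp (τ ^ 2 - σ ^ 2) := by
      linarith [Real.add_one_le_exp (τ ^ 2 - σ ^ 2)]
    have hσM : σ ^ 2 ≤ Real.pi ^ 2 / (4 * M ^ 2) := by
      rw [hσsq]
      apply div_le_div_of_nonneg_left (by positivity) (by positivity)
      nlinarith
    linarith
  have h2 : ‖(br ε τ) ^ n‖ ≤ ((1 + Real.pi / (2 * M ^ 2)) * τ) ^ n := by
    rw [norm_pow]
    apply pow_le_pow_left₀ (norm_nonneg _)
    calc ‖br ε τ‖ ≤ ‖((σ : ℝ) : ℂ)‖ + ‖(τ : ℂ) * Complex.I‖ := norm_add_le _ _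
    _ = |σ| + |τ| := by simp [Complex.norm_real]
    _ ≤ Real.pi / (2 * M) + τ := by
        rw [abs_of_pos hτ0]; linarith
    _ ≤ (1 + Real.pi / (2 * M ^ 2)) * τ := by
        have : Real.pi / (2 * M) ≤ Real.pi / (2 * M ^ 2) * τ := by
          rw [div_mul_eq_mul_div, div_le_div_iff₀ (by positivity) (by positivity)]
          nlinarith [mul_nonneg (mul_nonneg Real.pi_pos.le hM.le) (sub_nonneg.2 hτM.le)]
        nlinarith
  have h3 : ‖Complex.exp (br ε τ * z)‖
      ≤ Real.exp (Real.pi / (2 * M) * T) * Real.exp (T * τ) := by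
    rw [Complex.norm_exp, ← Real.exp_add]
    apply Real.exp_le_exp.2
    have hbr : br ε τ = (σ : ℂ) + (τ : ℂ) * Complex.I := rfl
    have hre : (br ε τ * z).re = σ * z.re - τ * z.im := by
      rw [hbr]; simp [Complex.mul_re, Complex.add_re, Complex.add_im]
    rw [hre]
    have hzre : |z.re| ≤ T := (Complex.abs_re_le_norm z).trans hz
    have hzim : |z.im| ≤ T := (Complex.abs_im_le_norm z).trans hz
    have e1 : σ * z.re ≤ Real.pi / (2 * M) * T := by
      calc σ * z.re ≤ |σ * z.re| := le_abs_self _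
      _ = |σ| * |z.re| := abs_mul _ _
      _ ≤ Real.pi / (2 * M) * T := by
          apply mul_le_mul hσabs hzre (abs_nonneg _) (by positivity)
    have e2 : -(τ * z.im) ≤ T * τ := by
      calc -(τ * z.im) ≤ |τ * z.im| := neg_le_abs _
      _ = |τ| * |z.im| := abs_mul _ _
      _ ≤ τ * T := by
          rw [abs_of_pos hτ0]
          exact mul_le_mul le_rfl hzim (abs_nonneg _) hτ0.le
      _ = T * τ := mul_comm _ _
    linarith
  have h4 : ‖dbr ε τ‖ ≤ 1 + Real.pi / (2 * M ^ 2) := by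
    unfold dbr
    have hε1 : |ε| = 1 := by rcases hε with h | h <;> simp [h]
    have hn : ‖((ε * (Real.pi / (2 * τ ^ 2)) : ℝ) : ℂ)‖ = Real.pi / (2 * τ ^ 2) := by
      rw [Complex.norm_real, Real.norm_eq_abs, abs_mul, hε1, one_mul,
        abs_of_pos (by positivity : (0:ℝ) < Real.pi / (2 * τ ^ 2))]
    calc ‖Complex.I - ((ε * (Real.pi / (2 * τ ^ 2)) : ℝ) : ℂ)‖
        ≤ ‖Complex.I‖ + ‖((ε * (Real.pi / (2 * τ ^ 2)) : ℝ) : ℂ)‖ := norm_sub_le _ _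
    _ = 1 + Real.pi / (2 * τ ^ 2) := by rw [hn, Complex.norm_I]
    _ ≤ 1 + Real.pi / (2 * M ^ 2) := by
        have : Real.pi / (2 * τ ^ 2) ≤ Real.pi / (2 * M ^ 2) := by
          apply div_le_div_of_nonneg_left Real.pi_pos.le (by positivity)
          nlinarith
        linarith
  calc ‖FB ε n z τ‖ = ‖Complex.exp (Complex.exp (-(br ε τ) ^ 2))‖ * ‖(br ε τ) ^ n‖ *
        ‖Complex.exp (br ε τ * z)‖ * ‖dbr ε τ‖ := by
        simp [FB, norm_mul]
  _ ≤ (Real.exp (Real.pi ^ 2 / (4 * M ^ 2)) * Real.exp (-τ ^ 2)) *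
        (((1 + Real.pi / (2 * M ^ 2)) * τ) ^ n) *
        (Real.exp (Real.pi / (2 * M) * T) * Real.exp (T * τ)) *
        (1 + Real.pi / (2 * M ^ 2)) := by
        gcongr <;> first | positivity | exact norm_nonneg _
  _ = K M T n * (τ ^ n * (Real.exp (T * τ) * Real.exp (-τ ^ 2))) := by
        unfold K; rw [mul_pow]; ring

lemma intOn_bound {M : ℝ} (hM : 0 < M) (c : ℝ) (hc : 0 ≤ c) (T : ℝ) (hT : 0 ≤ T) (n : ℕ) :
    IntegrableOn (fun τ : ℝ => c * (τ ^ n * (Real.exp (T * τ) * Real.exp (-τ ^ 2))))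
      (Set.Ioi M) := by
  have h := (integrableOn_rpow_mul_exp_neg_mul_sq (b := 3/4) (by norm_num)
    (s := (n : ℝ)) (lt_of_lt_of_le neg_one_lt_zero (Nat.cast_nonneg n))).mono_set
    (Set.Ioi_subset_Ioi hM.le)
  have heq : (fun x : ℝ => x ^ ((n : ℝ) : ℝ) * Real.exp (-(3/4) * x ^ 2))
      = fun x : ℝ => x ^ n * Real.exp (-(3/4) * x ^ 2) := by
    funext x; rw [Real.rpow_natCast]
  rw [heq] at h
  have h2 := (h.const_mul (c * Real.exp (T ^ 2)))
  apply Integrable.mono' h2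
  · apply Continuous.aestronglyMeasurable
    continuity
  · rw [ae_restrict_iff' measurableSet_Ioi]
    refine ae_of_all _ fun τ hτ => ?_
    have hτ0 : 0 < τ := hM.trans hτ
    rw [Real.norm_eq_abs, abs_of_nonneg (by positivity)]
    have key : Real.exp (T * τ) * Real.exp (-τ ^ 2)
        ≤ Real.exp (T ^ 2) * Real.exp (-(3/4) * τ ^ 2) := by
      rw [← Real.exp_add, ← Real.exp_add]
      apply Real.exp_le_exp.2
      nlinarith [sq_nonneg (τ / 2 - T)]
    calc c * (τ ^ n * (Real.exp (T * τ) * Real.exp (-τ ^ 2)))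
        ≤ c * (τ ^ n * (Real.exp (T ^ 2) * Real.exp (-(3/4) * τ ^ 2))) := by
          apply mul_le_mul_of_nonneg_left _ hc
          apply mul_le_mul_of_nonneg_left key (by positivity)
    _ = c * Real.exp (T ^ 2) * (τ ^ n * Real.exp (-(3/4) * τ ^ 2)) := by ring

lemma K_nonneg {M : ℝ} (hM : 0 < M) (T : ℝ) (n : ℕ) : 0 ≤ K M T n := by
  unfold K; positivity

lemma measFB {M : ℝ} (hM : 0 < M) (ε : ℝ) (n : ℕ) (z : ℂ) :
    AEStronglyMeasurable (FB ε n z) (volume.restrict (Set.Ioi M)) :=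
  ((contOn_FB ε n z).mono (Set.Ioi_subset_Ioi hM.le)).aestronglyMeasurable measurableSet_Ioi

lemma intOn_FB {M : ℝ} (hM : 0 < M) {ε : ℝ} (hε : ε = 1 ∨ ε = -1) (n : ℕ) (z : ℂ) :
    IntegrableOn (FB ε n z) (Set.Ioi M) := by
  apply Integrable.mono'
    (intOn_bound hM (K M ‖z‖ n) (K_nonneg hM ‖z‖ n) ‖z‖ (norm_nonneg z) n) (measFB hM ε n z)
  rw [ae_restrict_iff' measurableSet_Ioi]
  exact ae_of_all _ fun τ hτ => FB_norm_le hM ‖z‖ n hε hτ le_rfl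

lemma hasDerivAt_FB_z (ε : ℝ) (n : ℕ) (τ : ℝ) (z : ℂ) :
    HasDerivAt (fun z : ℂ => FB ε n z τ) (FB ε (n + 1) z τ) z := by
  set C : ℂ := Complex.exp (Complex.exp (-(br ε τ) ^ 2)) * (br ε τ) ^ n with hC
  have h1 : HasDerivAt (fun z : ℂ => br ε τ * z) (br ε τ) z := by
    simpa using (hasDerivAt_id z).const_mul (br ε τ)
  have h3 := (h1.cexp.const_mul C).mul_const (dbr ε τ)
  refine h3.congr_deriv ?_
  · simp only [FB, hC, pow_succ]; ring

set_option maxHeartbeats 1000000 in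
lemma hasDerivAt_IB {M : ℝ} (hM : 0 < M) {ε : ℝ} (hε : ε = 1 ∨ ε = -1) (n : ℕ) (z₀ : ℂ) :
    HasDerivAt (fun z : ℂ => ∫ τ in Set.Ioi M, FB ε n z τ)
      (∫ τ in Set.Ioi M, FB ε (n + 1) z₀ τ) z₀ := by
  refine (_root_.hasDerivAt_integral_of_dominated_loc_of_deriv_le
    (μ := volume.restrict (Set.Ioi M)) (x₀ := z₀)
    (F := fun z τ => FB ε n z τ) (F' := fun z τ => FB ε (n + 1) z τ)
    (bound := fun τ => K M (‖z₀‖ + 1) (n + 1) *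
      (τ ^ (n + 1) * (Real.exp ((‖z₀‖ + 1) * τ) * Real.exp (-τ ^ 2))))
    (s := Metric.ball z₀ 1) (Metric.ball_mem_nhds z₀ one_pos) ?_ ?_ ?_ ?_ ?_ ?_).2
  · exact Eventually.of_forall fun z => measFB hM ε n z
  · exact intOn_FB hM hε n z₀
  · exact measFB hM ε (n + 1) z₀
  · rw [ae_restrict_iff' measurableSet_Ioi]
    refine ae_of_all _ fun τ hτ x hx => FB_norm_le hM (‖z₀‖ + 1) (n + 1) hε hτ ?_
    have h1 : ‖x - z₀‖ < 1 := by simpa [dist_eq_norm] using hx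
    have h2 := norm_sub_norm_le x z₀
    linarith
  · exact intOn_bound hM _ (K_nonneg hM _ _) _ (by positivity) _
  · exact ae_of_all _ fun τ x _ => hasDerivAt_FB_z ε n τ x

noncomputable def KH (M T : ℝ) (n : ℕ) : ℝ :=
  Real.exp (Real.exp (M ^ 2)) * (Real.pi / (2 * M) + M) ^ n *
    Real.exp ((Real.pi / (2 * M) + M) * T)

lemma cont_FH (M : ℝ) (n : ℕ) (z : ℂ) : Continuous (FH M n z) := by
  unfold FH; fun_prop

lemma FH_norm_le {M : ℝ} (hM : 0 < M) (T : ℝ) (n : ℕ)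
    {σ : ℝ} (hσ : |σ| ≤ Real.pi / (2 * M)) {z : ℂ} (hz : ‖z‖ ≤ T) :
    ‖FH M n z σ‖ ≤ KH M T n := by
  set ζ : ℂ := (σ : ℂ) + M * Complex.I with hζ
  have hT0 : 0 ≤ T := (norm_nonneg z).trans hz
  have hre : ζ.re = σ := by simp [hζ]
  have him : ζ.im = M := by simp [hζ]
  have habs : ‖ζ‖ ≤ Real.pi / (2 * M) + M := by
    calc ‖ζ‖ ≤ |ζ.re| + |ζ.im| := Complex.norm_le_abs_re_add_abs_im ζ
    _ ≤ Real.pi / (2 * M) + M := by rw [hre, him, abs_of_pos hM]; linarith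
  have h1 : ‖Complex.exp (Complex.exp (-ζ ^ 2))‖ ≤ Real.exp (Real.exp (M ^ 2)) := by
    rw [Complex.norm_exp]
    apply Real.exp_le_exp.2
    calc (Complex.exp (-ζ ^ 2)).re ≤ ‖Complex.exp (-ζ ^ 2)‖ :=
        Complex.re_le_norm _
    _ = Real.exp ((-ζ ^ 2).re) := Complex.norm_exp _
    _ ≤ Real.exp (M ^ 2) := by
        apply Real.exp_le_exp.2
        have : (-ζ ^ 2).re = M ^ 2 - σ ^ 2 := by
          rw [show (-ζ^2) = -(ζ*ζ) by ring]
          simp [Complex.mul_re, hre, him]; ring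
        rw [this]; nlinarith [sq_nonneg σ]
  have h2 : ‖ζ ^ n‖ ≤ (Real.pi / (2 * M) + M) ^ n := by
    rw [norm_pow]
    exact pow_le_pow_left₀ (norm_nonneg _) habs n
  have h3 : ‖Complex.exp (ζ * z)‖ ≤ Real.exp ((Real.pi / (2 * M) + M) * T) := by
    rw [Complex.norm_exp]
    apply Real.exp_le_exp.2
    calc (ζ * z).re ≤ ‖ζ * z‖ := Complex.re_le_norm _
    _ = ‖ζ‖ * ‖z‖ := norm_mul _ _
    _ ≤ (Real.pi / (2 * M) + M) * T := by
        apply mul_le_mul habs hz (norm_nonneg _) (by positivity)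
  calc ‖FH M n z σ‖ = ‖Complex.exp (Complex.exp (-ζ ^ 2))‖ * ‖ζ ^ n‖ *
        ‖Complex.exp (ζ * z)‖ := by simp [FH, norm_mul, hζ]
  _ ≤ Real.exp (Real.exp (M ^ 2)) * (Real.pi / (2 * M) + M) ^ n *
        Real.exp ((Real.pi / (2 * M) + M) * T) := by
      gcongr <;> first | positivity | exact norm_nonneg _
  _ = KH M T n := rfl

lemma hasDerivAt_FH_z (M : ℝ) (n : ℕ) (σ : ℝ) (z : ℂ) :
    HasDerivAt (fun z : ℂ => FH M n z σ) (FH M (n + 1) z σ) z := by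
  set ζ : ℂ := (σ : ℂ) + M * Complex.I with hζ
  set C : ℂ := Complex.exp (Complex.exp (-ζ ^ 2)) * ζ ^ n with hC
  have h1 : HasDerivAt (fun z : ℂ => ζ * z) ζ z := by
    simpa using (hasDerivAt_id z).const_mul ζ
  have h3 := h1.cexp.const_mul C
  refine h3.congr_deriv ?_
  · simp only [FH, hC, hζ, pow_succ]; ring

lemma hasDerivAt_IH {M : ℝ} (hM : 0 < M) (n : ℕ) (z₀ : ℂ) :
    HasDerivAt (fun z : ℂ => ∫ σ in (-(Real.pi / (2 * M)))..(Real.pi / (2 * M)), FH M n z σ)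
      (∫ σ in (-(Real.pi / (2 * M)))..(Real.pi / (2 * M)), FH M (n + 1) z₀ σ) z₀ := by
  have ha : (0:ℝ) < Real.pi / (2 * M) := by positivity
  refine (intervalIntegral.hasDerivAt_integral_of_dominated_loc_of_deriv_le
    (F := fun z σ => FH M n z σ) (F' := fun z σ => FH M (n + 1) z σ)
    (bound := fun _ => KH M (‖z₀‖ + 1) (n + 1)) (s := Metric.ball z₀ 1) (Metric.ball_mem_nhds z₀ one_pos) ?_ ?_ ?_ ?_ ?_ ?_).2
  · exact Eventually.of_forall fun z => (cont_FH M n z).aestronglyMeasurable.restrict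
  · exact (cont_FH M n z₀).intervalIntegrable _ _
  · exact (cont_FH M (n + 1) z₀).aestronglyMeasurable.restrict
  · refine ae_of_all _ fun σ hσ x hx => FH_norm_le hM (‖z₀‖ + 1) (n + 1) ?_ ?_
    · rw [Set.uIoc_of_le (by linarith : -(Real.pi / (2 * M)) ≤ Real.pi / (2 * M))] at hσ
      rw [abs_le]; exact ⟨hσ.1.le, hσ.2⟩
    · have h1 : ‖x - z₀‖ < 1 := by simpa [dist_eq_norm] using hx
      have h2 := norm_sub_norm_le x z₀
      linarith
  · exact intervalIntegrable_const
  · exact ae_of_all _ fun σ _ x _ => hasDerivAt_FH_z M n σ x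

/-! ### M-dependence -/

noncomputable def cc (M u : ℝ) : ℂ :=
  ((Real.pi * u / (2 * M) : ℝ) : ℂ) + M * Complex.I
noncomputable def HH (z : ℂ) (M u : ℝ) : ℂ :=
  Complex.exp (Complex.exp (-(cc M u) ^ 2)) * Complex.exp (cc M u * z)
noncomputable def DD (z : ℂ) (M u : ℝ) : ℂ :=
  HH z M u * (Complex.exp (-(cc M u) ^ 2) * (-2 * cc M u) + z)
noncomputable def dHH (z : ℂ) (M u : ℝ) : ℂ :=
  DD z M u * (Complex.I - ((Real.pi * u / (2 * M ^ 2) : ℝ) : ℂ))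

/-- generic chain rule for our entire function -/
lemma hasDerivAt_gg_comp {f : ℝ → ℂ} {f' : ℂ} {x : ℝ} (w : ℂ) (hf : HasDerivAt f f' x) :
    HasDerivAt (fun y => Complex.exp (Complex.exp (-(f y) ^ 2)) * Complex.exp (f y * w))
      ((Complex.exp (Complex.exp (-(f x) ^ 2)) * Complex.exp (f x * w)) *
        (Complex.exp (-(f x) ^ 2) * (-2 * f x) + w) * f') x := by
  have h2 := ((hf.mul hf).neg.cexp).cexp
  have h3 := (hf.mul_const w).cexp
  have e : (fun y => Complex.exp (Complex.exp (-(f y) ^ 2)) * Complex.exp (f y * w))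
      = fun y => Complex.exp (Complex.exp (-(f y * f y))) * Complex.exp (f y * w) := by
    funext y; rw [pow_two]
  rw [e]
  refine (h2.mul h3).congr_deriv ?_
  · simp only [Pi.neg_apply, Pi.mul_apply]; rw [pow_two]; ring

lemma cont_cc_u (M : ℝ) : Continuous (fun u => cc M u) := by unfold cc; fun_prop
lemma cont_HH_u (z : ℂ) (M : ℝ) : Continuous (fun u => HH z M u) := by unfold HH cc; fun_prop
lemma cont_DD_u (z : ℂ) (M : ℝ) : Continuous (fun u => DD z M u) := by unfold DD HH cc; fun_prop
lemma cont_dHH_u (z : ℂ) (M : ℝ) : Continuous (fun u => dHH z M u) := by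
  unfold dHH DD HH cc; fun_prop

lemma hasDerivAt_cc_M (u : ℝ) {M : ℝ} (hM : M ≠ 0) :
    HasDerivAt (fun M => cc M u)
      (Complex.I - ((Real.pi * u / (2 * M ^ 2) : ℝ) : ℂ)) M := by
  have h1 : HasDerivAt (fun M : ℝ => Real.pi * u / 2 * M⁻¹)
      (Real.pi * u / 2 * -(M ^ 2)⁻¹) M := (hasDerivAt_inv hM).const_mul _
  have h2 : HasDerivAt (fun M : ℝ => (M : ℂ) * Complex.I) Complex.I M := by
    simpa using ((hasDerivAt_id M).ofReal_comp).mul_const Complex.I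
  have := (h1.ofReal_comp).add h2
  have e : (fun M => cc M u)
      = fun x : ℝ => ((Real.pi * u / 2 * x⁻¹ : ℝ) : ℂ) + (x : ℂ) * Complex.I := by
    funext x; unfold cc; push_cast; ring
  rw [e]
  refine this.congr_deriv ?_
  · push_cast; ring

lemma hasDerivAt_HH_M (z : ℂ) (u : ℝ) {M : ℝ} (hM : M ≠ 0) :
    HasDerivAt (fun M => HH z M u) (dHH z M u) M := by
  have := hasDerivAt_gg_comp z (hasDerivAt_cc_M u hM)
  exact this

lemma hasDerivAt_HH_u (z : ℂ) (M : ℝ) (u : ℝ) :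
    HasDerivAt (fun u => HH z M u) (DD z M u * ((Real.pi / (2 * M) : ℝ) : ℂ)) u := by
  have hc : HasDerivAt (fun u => cc M u) ((Real.pi / (2 * M) : ℝ) : ℂ) u := by
    have h1 : HasDerivAt (fun u : ℝ => Real.pi / (2 * M) * u) (Real.pi / (2 * M)) u := by
      simpa using (hasDerivAt_id u).const_mul (Real.pi / (2 * M))
    have h2 : HasDerivAt (fun _ : ℝ => (M : ℂ) * Complex.I) 0 u := hasDerivAt_const _ _
    have := (h1.ofReal_comp).add h2
    have e : (fun u => cc M u)
        = fun x : ℝ => ((Real.pi / (2 * M) * x : ℝ) : ℂ) + (M : ℂ) * Complex.I := by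
      funext x; unfold cc; push_cast; ring
    rw [e]
    refine this.congr_deriv ?_
    · push_cast; ring
  exact hasDerivAt_gg_comp z hc


/-! ### norm bounds in M -/

noncomputable def Rb (M₀ : ℝ) : ℝ := Real.pi / M₀ + 2 * M₀

noncomputable def CB (z : ℂ) (M₀ : ℝ) : ℝ :=
  (Real.exp (Real.exp (Rb M₀ ^ 2)) * Real.exp (Rb M₀ * ‖z‖)) *
    (Real.exp (Rb M₀ ^ 2) * (2 * Rb M₀) + ‖z‖) * (1 + 2 * Real.pi / M₀ ^ 2)

lemma HH_norm_le {R M u : ℝ} (h : ‖cc M u‖ ≤ R) (z : ℂ) :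
    ‖HH z M u‖ ≤ Real.exp (Real.exp (R ^ 2)) * Real.exp (R * ‖z‖) := by
  have h0 : ‖cc M u‖ ^ 2 ≤ R ^ 2 :=
    pow_le_pow_left₀ (norm_nonneg _) h 2
  have h1 : ‖Complex.exp (Complex.exp (-(cc M u) ^ 2))‖ ≤ Real.exp (Real.exp (R ^ 2)) := by
    rw [Complex.norm_exp]
    apply Real.exp_le_exp.2
    calc (Complex.exp (-(cc M u) ^ 2)).re ≤ ‖Complex.exp (-(cc M u) ^ 2)‖ :=
        Complex.re_le_norm _
    _ = Real.exp ((-(cc M u) ^ 2).re) := Complex.norm_exp _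
    _ ≤ Real.exp (R ^ 2) := by
        apply Real.exp_le_exp.2
        calc (-(cc M u) ^ 2).re ≤ ‖-(cc M u) ^ 2‖ := Complex.re_le_norm _
        _ = ‖cc M u‖ ^ 2 := by rw [norm_neg, norm_pow]
        _ ≤ R ^ 2 := h0
  have h2 : ‖Complex.exp (cc M u * z)‖ ≤ Real.exp (R * ‖z‖) := by
    rw [Complex.norm_exp]
    apply Real.exp_le_exp.2
    calc (cc M u * z).re ≤ ‖cc M u * z‖ := Complex.re_le_norm _
    _ = ‖cc M u‖ * ‖z‖ := by
        rw [norm_mul]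
    _ ≤ R * ‖z‖ := by
        apply mul_le_mul h le_rfl (norm_nonneg _) ((norm_nonneg _).trans h)
  calc ‖HH z M u‖ = ‖Complex.exp (Complex.exp (-(cc M u) ^ 2))‖ *
      ‖Complex.exp (cc M u * z)‖ := norm_mul _ _
  _ ≤ Real.exp (Real.exp (R ^ 2)) * Real.exp (R * ‖z‖) := by
      apply mul_le_mul h1 h2 (norm_nonneg _) (by positivity)

lemma DD_norm_le {R M u : ℝ} (h : ‖cc M u‖ ≤ R) (z : ℂ) :
    ‖DD z M u‖ ≤ (Real.exp (Real.exp (R ^ 2)) * Real.exp (R * ‖z‖)) *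
      (Real.exp (R ^ 2) * (2 * R) + ‖z‖) := by
  have hR : 0 ≤ R := (norm_nonneg _).trans h
  have h0 : ‖cc M u‖ ^ 2 ≤ R ^ 2 :=
    pow_le_pow_left₀ (norm_nonneg _) h 2
  have h1 : ‖Complex.exp (-(cc M u) ^ 2) * (-2 * cc M u) + z‖
      ≤ Real.exp (R ^ 2) * (2 * R) + ‖z‖ := by
    calc ‖Complex.exp (-(cc M u) ^ 2) * (-2 * cc M u) + z‖
        ≤ ‖Complex.exp (-(cc M u) ^ 2) * (-2 * cc M u)‖ + ‖z‖ := norm_add_le _ _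
    _ = ‖Complex.exp (-(cc M u) ^ 2)‖ * ‖(-2 : ℂ) * cc M u‖ + ‖z‖ := by
        rw [norm_mul]
    _ ≤ Real.exp (R ^ 2) * (2 * R) + ‖z‖ := by
        have ha : ‖Complex.exp (-(cc M u) ^ 2)‖ ≤ Real.exp (R ^ 2) := by
          rw [Complex.norm_exp]
          apply Real.exp_le_exp.2
          calc (-(cc M u) ^ 2).re ≤ ‖-(cc M u) ^ 2‖ := Complex.re_le_norm _
          _ = ‖cc M u‖ ^ 2 := by rw [norm_neg, norm_pow]
          _ ≤ R ^ 2 := h0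
        have hb : ‖(-2 : ℂ) * cc M u‖ ≤ 2 * R := by
          rw [norm_mul]
          have : ‖(-2 : ℂ)‖ = 2 := by norm_num
          rw [this]
          exact mul_le_mul le_rfl h (norm_nonneg _) (by norm_num)
        apply add_le_add _ le_rfl
        exact mul_le_mul ha hb (norm_nonneg _) (by positivity)
  calc ‖DD z M u‖ = ‖HH z M u‖ * ‖Complex.exp (-(cc M u) ^ 2) * (-2 * cc M u) + z‖ :=
      norm_mul _ _
  _ ≤ (Real.exp (Real.exp (R ^ 2)) * Real.exp (R * ‖z‖)) *
      (Real.exp (R ^ 2) * (2 * R) + ‖z‖) := by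
      apply mul_le_mul (HH_norm_le h z) h1 (norm_nonneg _) (by positivity)

lemma abs_cc_le {M₀ M u : ℝ} (hM₀ : 0 < M₀) (hM : M ∈ Metric.ball M₀ (M₀ / 2))
    (hu : |u| ≤ 1) : ‖cc M u‖ ≤ Rb M₀ := by
  have hball : |M - M₀| < M₀ / 2 := by simpa [Real.dist_eq] using hM
  have hM1 : M₀ / 2 < M := by cases' abs_lt.1 hball with h1 h2; linarith
  have hM2 : M < 3 * M₀ / 2 := by cases' abs_lt.1 hball with h1 h2; linarith
  have hMpos : 0 < M := lt_trans (by linarith) hM1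
  have hstep : ‖cc M u‖ ≤ |Real.pi * u / (2 * M)| + |M| := by
    have h := Complex.norm_le_abs_re_add_abs_im (cc M u)
    have hre : (cc M u).re = Real.pi * u / (2 * M) := by
      simp only [cc, Complex.add_re, Complex.ofReal_re, Complex.mul_re, Complex.ofReal_im,
        Complex.I_re, Complex.I_im]; ring
    have him : (cc M u).im = M := by
      simp only [cc, Complex.add_im, Complex.ofReal_im, Complex.mul_im, Complex.ofReal_re,
        Complex.I_re, Complex.I_im]; ring
    rwa [hre, him] at h
  refine hstep.trans ?_
  have hfin : |Real.pi * u / (2 * M)| + |M| ≤ Real.pi / M₀ + 2 * M₀ := by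
      have e1 : |Real.pi * u / (2 * M)| ≤ Real.pi / M₀ := by
        rw [abs_div, abs_mul, abs_of_pos Real.pi_pos,
          abs_of_pos (by positivity : (0:ℝ) < 2 * M)]
        rw [div_le_div_iff₀ (by positivity) hM₀]
        have : Real.pi * |u| ≤ Real.pi := by
          nlinarith [Real.pi_pos, abs_nonneg u]
        nlinarith [Real.pi_pos, abs_nonneg u, mul_le_mul_of_nonneg_right this hM₀.le]
      have e2 : |M| ≤ 2 * M₀ := by rw [abs_of_pos hMpos]; linarith
      linarith
  exact hfin.trans_eq rfl

lemma dHH_norm_le (z : ℂ) {M₀ M u : ℝ} (hM₀ : 0 < M₀) (hM : M ∈ Metric.ball M₀ (M₀ / 2))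
    (hu : |u| ≤ 1) : ‖dHH z M u‖ ≤ CB z M₀ := by
  have hball : |M - M₀| < M₀ / 2 := by simpa [Real.dist_eq] using hM
  have hM1 : M₀ / 2 < M := by cases' abs_lt.1 hball with h1 h2; linarith
  have hMpos : 0 < M := lt_trans (by linarith) hM1
  have h1 : ‖Complex.I - ((Real.pi * u / (2 * M ^ 2) : ℝ) : ℂ)‖
      ≤ 1 + 2 * Real.pi / M₀ ^ 2 := by
    calc ‖Complex.I - ((Real.pi * u / (2 * M ^ 2) : ℝ) : ℂ)‖
        ≤ ‖Complex.I‖ + ‖((Real.pi * u / (2 * M ^ 2) : ℝ) : ℂ)‖ := norm_sub_le _ _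
    _ = 1 + |Real.pi * u / (2 * M ^ 2)| := by
        rw [Complex.norm_I, Complex.norm_real, Real.norm_eq_abs]
    _ ≤ 1 + 2 * Real.pi / M₀ ^ 2 := by
        have : |Real.pi * u / (2 * M ^ 2)| ≤ 2 * Real.pi / M₀ ^ 2 := by
          rw [abs_div, abs_mul, abs_of_pos Real.pi_pos,
            abs_of_pos (by positivity : (0:ℝ) < 2 * M ^ 2)]
          rw [div_le_div_iff₀ (by positivity) (by positivity)]
          have hu' : Real.pi * |u| ≤ Real.pi := by
            nlinarith [Real.pi_pos, abs_nonneg u]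
          have hM₀M : M₀ ^ 2 ≤ 4 * M ^ 2 := by nlinarith
          nlinarith [Real.pi_pos, abs_nonneg u, mul_pos hM₀ hM₀]
        linarith
  calc ‖dHH z M u‖ = ‖DD z M u‖ * ‖Complex.I - ((Real.pi * u / (2 * M ^ 2) : ℝ) : ℂ)‖ :=
      norm_mul _ _
  _ ≤ ((Real.exp (Real.exp (Rb M₀ ^ 2)) * Real.exp (Rb M₀ * ‖z‖)) *
      (Real.exp (Rb M₀ ^ 2) * (2 * Rb M₀) + ‖z‖)) * (1 + 2 * Real.pi / M₀ ^ 2) := by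
      have hRb : 0 < Rb M₀ := by unfold Rb; positivity
      apply mul_le_mul (DD_norm_le (abs_cc_le hM₀ hM hu) z) h1 (norm_nonneg _) ?_
      apply mul_nonneg (by positivity)
      exact add_nonneg (mul_nonneg (Real.exp_pos _).le (by linarith)) (norm_nonneg _)
  _ = CB z M₀ := by unfold CB; ring

/-! ### derivative of J in M -/

lemma hasDerivAt_J (z : ℂ) {M₀ : ℝ} (hM₀ : 0 < M₀) :
    HasDerivAt (fun M => ∫ u in (-1:ℝ)..1, HH z M u)
      (∫ u in (-1:ℝ)..1, dHH z M₀ u) M₀ := by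
  refine (intervalIntegral.hasDerivAt_integral_of_dominated_loc_of_deriv_le
    (F := fun M u => HH z M u) (F' := fun M u => dHH z M u)
    (bound := fun _ => CB z M₀) (s := Metric.ball M₀ (M₀ / 2)) (Metric.ball_mem_nhds M₀ (half_pos hM₀)) ?_ ?_ ?_ ?_ ?_ ?_).2
  · exact Eventually.of_forall fun M => (cont_HH_u z M).aestronglyMeasurable.restrict
  · exact (cont_HH_u z M₀).intervalIntegrable _ _
  · exact (cont_dHH_u z M₀).aestronglyMeasurable.restrict
  · refine ae_of_all _ fun u hu M hM => dHH_norm_le z hM₀ hM ?_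
    rw [Set.uIoc_of_le (by norm_num : (-1:ℝ) ≤ 1)] at hu
    rw [abs_le]; exact ⟨hu.1.le, hu.2⟩
  · exact intervalIntegrable_const
  · refine ae_of_all _ fun u _ M hM => hasDerivAt_HH_M z u ?_
    have hball : |M - M₀| < M₀ / 2 := by simpa [Real.dist_eq] using hM
    have : M₀ / 2 < M := by cases' abs_lt.1 hball with h1 h2; linarith
    exact (lt_trans (half_pos hM₀) this).ne'

/-! ### FTC and IBP identities -/

lemma int_DD_eq (z : ℂ) (M : ℝ) :
    (∫ u in (-1:ℝ)..1, DD z M u) * ((Real.pi / (2 * M) : ℝ) : ℂ)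
      = HH z M 1 - HH z M (-1) := by
  have h := intervalIntegral.integral_eq_sub_of_hasDerivAt (a := (-1:ℝ)) (b := (1:ℝ))
    (f := fun u => HH z M u) (f' := fun u => DD z M u * ((Real.pi / (2 * M) : ℝ) : ℂ))
    (fun x _ => hasDerivAt_HH_u z M x)
    (((cont_DD_u z M).mul continuous_const).intervalIntegrable _ _)
  rw [← h, intervalIntegral.integral_mul_const]

lemma int_u_DD_eq (z : ℂ) (M : ℝ) :
    (∫ u in (-1:ℝ)..1, (u : ℂ) * DD z M u) * ((Real.pi / (2 * M) : ℝ) : ℂ)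
      = HH z M 1 + HH z M (-1) - ∫ u in (-1:ℝ)..1, HH z M u := by
  have h := intervalIntegral.integral_mul_deriv_eq_deriv_mul
    (u := fun x : ℝ => (x : ℂ)) (u' := fun _ => (1 : ℂ))
    (v := fun x => HH z M x) (v' := fun x => DD z M x * ((Real.pi / (2 * M) : ℝ) : ℂ))
    (a := -1) (b := 1)
    (fun x _ => by simpa using (hasDerivAt_id x).ofReal_comp)
    (fun x _ => hasDerivAt_HH_u z M x)
    intervalIntegrable_const
    (((cont_DD_u z M).mul continuous_const).intervalIntegrable _ _)
  have h2 : (fun x : ℝ => (x : ℂ) * (DD z M x * ((Real.pi / (2 * M) : ℝ) : ℂ)))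
      = fun x : ℝ => ((x : ℂ) * DD z M x) * ((Real.pi / (2 * M) : ℝ) : ℂ) := by
    funext x; ring
  rw [h2] at h
  rw [intervalIntegral.integral_mul_const] at h
  rw [h]
  push_cast
  have h3 : (fun x : ℝ => (1 : ℂ) * HH z M x) = fun x : ℝ => HH z M x := by
    funext x; rw [one_mul]
  rw [h3]
  ring


/-! ### substitution for the horizontal integral -/

lemma IH_subst (z : ℂ) {M : ℝ} (hM : M ≠ 0) :
    (∫ σ in (-(Real.pi / (2 * M)))..(Real.pi / (2 * M)), FH M 0 z σ)
      = ((Real.pi / (2 * M) : ℝ) : ℂ) * ∫ u in (-1:ℝ)..1, HH z M u := by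
  have hs := intervalIntegral.integral_comp_smul_deriv (a := (-1:ℝ)) (b := 1)
    (f := fun u => Real.pi / (2 * M) * u) (f' := fun _ => Real.pi / (2 * M))
    (g := FH M 0 z)
    (fun x _ => by simpa using (hasDerivAt_id x).const_mul (Real.pi / (2 * M)))
    continuousOn_const (cont_FH M 0 z)
  have he1 : Real.pi / (2 * M) * (-1 : ℝ) = -(Real.pi / (2 * M)) := by ring
  have he2 : Real.pi / (2 * M) * (1 : ℝ) = Real.pi / (2 * M) := by ring
  simp only [Function.comp_apply] at hs
  rw [he1, he2] at hs
  rw [← hs]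
  have hint : ∀ u : ℝ, (Real.pi / (2 * M)) • FH M 0 z (Real.pi / (2 * M) * u)
      = ((Real.pi / (2 * M) : ℝ) : ℂ) * HH z M u := by
    intro u
    rw [Complex.real_smul]
    congr 1
    rw [show Real.pi / (2 * M) * u = Real.pi * u / (2 * M) by ring]
    simp only [FH, HH, cc, pow_zero, mul_one]
  rw [intervalIntegral.integral_congr
    (g := fun u : ℝ => ((Real.pi / (2 * M) : ℝ) : ℂ) * HH z M u) (fun u _ => hint u),
    intervalIntegral.integral_const_mul]

/-! ### derivative of the horizontal integral in M -/

lemma hasDerivAt_IHM (z : ℂ) {M : ℝ} (hM : 0 < M) :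
    HasDerivAt (fun M => ∫ σ in (-(Real.pi / (2 * M)))..(Real.pi / (2 * M)), FH M 0 z σ)
      (Complex.I * (HH z M 1 - HH z M (-1))
        - ((Real.pi / (2 * M ^ 2) : ℝ) : ℂ) * (HH z M 1 + HH z M (-1))) M := by
  have hk : HasDerivAt (fun M : ℝ => ((Real.pi / (2 * M) : ℝ) : ℂ))
      ((-(Real.pi / (2 * M ^ 2)) : ℝ) : ℂ) M := by
    have h1 : HasDerivAt (fun M : ℝ => Real.pi / 2 * M⁻¹) (Real.pi / 2 * -(M ^ 2)⁻¹) M :=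
      (hasDerivAt_inv hM.ne').const_mul _
    have := h1.ofReal_comp
    have e : (fun M : ℝ => ((Real.pi / (2 * M) : ℝ) : ℂ))
        = fun x : ℝ => ((Real.pi / 2 * x⁻¹ : ℝ) : ℂ) := by
      funext x; norm_num; ring
    rw [e]
    refine this.congr_deriv ?_
    · norm_num; ring
  have hJ := hasDerivAt_J z hM
  have hprod := hk.mul hJ
  have heq : (fun M => ∫ σ in (-(Real.pi / (2 * M)))..(Real.pi / (2 * M)), FH M 0 z σ)
      =ᶠ[nhds M] fun M => ((Real.pi / (2 * M) : ℝ) : ℂ) * ∫ u in (-1:ℝ)..1, HH z M u := by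
    filter_upwards [IsOpen.mem_nhds isOpen_Ioi hM] with x hx
    exact IH_subst z (ne_of_gt hx)
  refine (HasDerivAt.congr_of_eventuallyEq ?_ heq)
  refine hprod.congr_deriv ?_
  symm
  -- identity for the derivative value
  have hS := int_DD_eq z M
  have hU := int_u_DD_eq z M
  have hsplit : (∫ u in (-1:ℝ)..1, dHH z M u)
      = (∫ u in (-1:ℝ)..1, DD z M u) * Complex.I
        - ((Real.pi / (2 * M ^ 2) : ℝ) : ℂ) * ∫ u in (-1:ℝ)..1, (u : ℂ) * DD z M u := by
    have e1 : (fun u : ℝ => dHH z M u)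
        = fun u : ℝ => DD z M u * Complex.I
          - ((Real.pi / (2 * M ^ 2) : ℝ) : ℂ) * ((u : ℂ) * DD z M u) := by
      funext u
      unfold dHH
      push_cast
      ring
    rw [e1, intervalIntegral.integral_sub, intervalIntegral.integral_mul_const,
      intervalIntegral.integral_const_mul]
    · exact ((cont_DD_u z M).mul continuous_const).intervalIntegrable _ _
    · exact (continuous_const.mul ((Complex.continuous_ofReal.mul (cont_DD_u z M)))).intervalIntegrable _ _
  rw [hsplit]
  set S := ∫ u in (-1:ℝ)..1, DD z M u
  set U := ∫ u in (-1:ℝ)..1, (u : ℂ) * DD z M u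
  set J := ∫ u in (-1:ℝ)..1, HH z M u
  have hcast : ((-(Real.pi / (2 * M ^ 2)) : ℝ) : ℂ) = -((Real.pi / (2 * M ^ 2) : ℝ) : ℂ) := by
    push_cast; ring
  rw [hcast]
  have hkk : ((Real.pi / (2 * M) : ℝ) : ℂ) * ((Real.pi / (2 * M ^ 2) : ℝ) : ℂ)
      = ((Real.pi / (2 * M ^ 2) : ℝ) : ℂ) * ((Real.pi / (2 * M) : ℝ) : ℂ) := by ring
  linear_combination (-Complex.I) * hS + ((Real.pi / (2 * M ^ 2) : ℝ) : ℂ) * hU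

/-! ### derivative of the branch integrals in M -/

lemma IB_split {x y : ℝ} (h0 : 0 < x) (hxy : x ≤ y) (ε : ℝ) (hε : ε = 1 ∨ ε = -1)
    (n : ℕ) (z : ℂ) :
    ∫ τ in Set.Ioi x, FB ε n z τ
      = (∫ τ in x..y, FB ε n z τ) + ∫ τ in Set.Ioi y, FB ε n z τ := by
  rw [intervalIntegral.integral_of_le hxy]
  rw [← Set.Ioc_union_Ioi_eq_Ioi hxy]
  rw [MeasureTheory.setIntegral_union (Set.Ioc_disjoint_Ioi le_rfl) measurableSet_Ioi
    ((intOn_FB h0 hε n z).mono_set Set.Ioc_subset_Ioi_self)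
    ((intOn_FB h0 hε n z).mono_set (Set.Ioi_subset_Ioi hxy))]

lemma hasDerivAt_IB_M (ε : ℝ) (hε : ε = 1 ∨ ε = -1) (n : ℕ) (z : ℂ) {M : ℝ} (hM : 0 < M) :
    HasDerivAt (fun x => ∫ τ in Set.Ioi x, FB ε n z τ) (-(FB ε n z M)) M := by
  have hb : (0:ℝ) < M / 2 := half_pos hM
  have hbM : M / 2 < M := by linarith
  have hsub : Set.uIcc (M/2) M ⊆ Set.Ioi (0:ℝ) := by
    rw [Set.uIcc_of_le hbM.le]
    intro z hz
    exact lt_of_lt_of_le hb hz.1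
  have hint : IntervalIntegrable (FB ε n z) volume (M/2) M :=
    ContinuousOn.intervalIntegrable ((contOn_FB ε n z).mono hsub)
  have hmeas : StronglyMeasurableAtFilter (FB ε n z) (nhds M) :=
    ⟨Set.Ioi 0, IsOpen.mem_nhds isOpen_Ioi hM,
      (contOn_FB ε n z).aestronglyMeasurable measurableSet_Ioi⟩
  have hcont : ContinuousAt (FB ε n z) M :=
    (contOn_FB ε n z).continuousAt (IsOpen.mem_nhds isOpen_Ioi hM)
  have hW : HasDerivAt
      (fun x => (∫ τ in Set.Ioi (M/2), FB ε n z τ) - ∫ τ in (M/2)..x, FB ε n z τ)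
      (-(FB ε n z M)) M :=
    (intervalIntegral.integral_hasDerivAt_right hint hmeas hcont).const_sub _
  apply hW.congr_of_eventuallyEq
  filter_upwards [IsOpen.mem_nhds isOpen_Ioi hbM] with x hx
  have hx0 : (0:ℝ) < M/2 := hb
  have hsp := IB_split hx0 (le_of_lt hx) ε hε n z
  rw [hsp]
  ring

/-! ### the full contour integral has zero derivative in M -/

lemma cc_eq_br_pos (M : ℝ) : cc M 1 = br 1 M := by
  unfold cc br; push_cast; ring_nf

lemma cc_eq_br_neg (M : ℝ) : cc M (-1) = br (-1) M := by
  unfold cc br; push_cast; ring_nf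

noncomputable def Gm (z : ℂ) (M : ℝ) : ℂ :=
  (∫ τ in Set.Ioi M, FB (-1) 0 z τ) - (∫ τ in Set.Ioi M, FB 1 0 z τ)
    - ∫ σ in (-(Real.pi / (2 * M)))..(Real.pi / (2 * M)), FH M 0 z σ

lemma hasDerivAt_Gm (z : ℂ) {M : ℝ} (hM : 0 < M) : HasDerivAt (Gm z) 0 M := by
  have h1 := hasDerivAt_IB_M (-1) (Or.inr rfl) 0 z hM
  have h2 := hasDerivAt_IB_M 1 (Or.inl rfl) 0 z hM
  have h3 := hasDerivAt_IHM z hM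
  have := (h1.sub h2).sub h3
  refine this.congr_deriv ?_
  have e1 : FB (-1) 0 z M = HH z M (-1) * dbr (-1) M := by
    rw [HH, cc_eq_br_neg]
    simp only [FB, pow_zero, mul_one]
  have e2 : FB 1 0 z M = HH z M 1 * dbr 1 M := by
    rw [HH, cc_eq_br_pos]
    simp only [FB, pow_zero, mul_one]
  rw [e1, e2]
  unfold dbr
  push_cast
  ring

lemma Gm_const (z : ℂ) {x y : ℝ} (hx : 0 < x) (hy : 0 < y) : Gm z x = Gm z y := by
  have key : ∀ a b : ℝ, 0 < a → a ≤ b → Gm z b = Gm z a := by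
    intro a b ha hab
    have hcont : ContinuousOn (Gm z) (Set.Icc a b) := fun w hw =>
      ((hasDerivAt_Gm z (lt_of_lt_of_le ha hw.1)).continuousAt).continuousWithinAt
    have hderiv : ∀ w ∈ Set.Ico a b, HasDerivWithinAt (Gm z) 0 (Set.Ici w) w := fun w hw =>
      (hasDerivAt_Gm z (lt_of_lt_of_le ha hw.1)).hasDerivWithinAt
    exact constant_of_has_deriv_right_zero hcont hderiv b ⟨hab, le_rfl⟩
  rcases le_total x y with h | h
  · exact (key x y hx h).symm
  · exact key y x hy h


/-! ### conversion to the statement's integrands -/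

lemma FBneg_eq (z : ℂ) (τ : ℝ) :
    Complex.exp (Complex.exp (-((((-(Real.pi / (2 * τ)) : ℝ) : ℂ) + τ * Complex.I)) ^ 2)) *
      Complex.exp (((((-(Real.pi / (2 * τ)) : ℝ) : ℂ) + τ * Complex.I)) * z) *
      (((Real.pi / (2 * τ ^ 2) : ℝ) : ℂ) + Complex.I) = FB (-1) 0 z τ := by
  have e1 : ((-(Real.pi / (2 * τ)) : ℝ) : ℂ)
      = ((((-1 : ℝ) * (Real.pi / (2 * τ))) : ℝ) : ℂ) := by norm_num
  have e2 : (((Real.pi / (2 * τ ^ 2)) : ℝ) : ℂ) + Complex.I = dbr (-1) τ := by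
    unfold dbr; push_cast; ring
  rw [e1, e2]
  simp only [FB, br, pow_zero, mul_one]

lemma FBpos_eq (z : ℂ) (τ : ℝ) :
    Complex.exp (Complex.exp (-((((Real.pi / (2 * τ) : ℝ) : ℂ) + τ * Complex.I)) ^ 2)) *
      Complex.exp (((((Real.pi / (2 * τ) : ℝ) : ℂ) + τ * Complex.I)) * z) *
      (Complex.I - ((Real.pi / (2 * τ ^ 2) : ℝ) : ℂ)) = FB 1 0 z τ := by
  have e1 : ((Real.pi / (2 * τ) : ℝ) : ℂ)
      = ((((1 : ℝ) * (Real.pi / (2 * τ))) : ℝ) : ℂ) := by norm_num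
  have e2 : Complex.I - (((Real.pi / (2 * τ ^ 2)) : ℝ) : ℂ) = dbr 1 τ := by
    unfold dbr; push_cast; ring
  rw [e1, e2]
  simp only [FB, br, pow_zero, mul_one]

lemma FH_eq (M : ℝ) (z : ℂ) (σ : ℝ) :
    Complex.exp (Complex.exp (-((σ : ℂ) + M * Complex.I) ^ 2)) *
      Complex.exp (((σ : ℂ) + M * Complex.I) * z) = FH M 0 z σ := by
  simp only [FH, pow_zero, mul_one]

lemma gammaInt_eq (M t : ℝ) :
    gammaInt M (fun ζ : ℂ => Complex.exp (Complex.exp (-ζ ^ 2)) * Complex.exp (ζ * t))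
      = Gm (t : ℂ) M := by
  unfold gammaInt Gm
  congr 1
  · congr 1
    · exact MeasureTheory.integral_congr_ae (ae_of_all _ fun τ => FBneg_eq (t : ℂ) τ)
    · exact MeasureTheory.integral_congr_ae (ae_of_all _ fun τ => FBpos_eq (t : ℂ) τ)
  · exact intervalIntegral.integral_congr fun σ _ => FH_eq M (t : ℂ) σ

lemma gammaIntegrable {M : ℝ} (hM : 0 < M) (t : ℝ) :
    GammaIntegrable M
      (fun ζ : ℂ => Complex.exp (Complex.exp (-ζ ^ 2)) * Complex.exp (ζ * t)) := by
  refine ⟨?_, ?_, ?_⟩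
  · exact (intOn_FB hM (Or.inr rfl) 0 (t : ℂ)).congr
      (ae_of_all _ fun τ => (FBneg_eq (t : ℂ) τ).symm)
  · exact (intOn_FB hM (Or.inl rfl) 0 (t : ℂ)).congr
      (ae_of_all _ fun τ => (FBpos_eq (t : ℂ) τ).symm)
  · have e : (fun σ : ℝ => Complex.exp (Complex.exp (-((σ : ℂ) + M * Complex.I) ^ 2)) *
        Complex.exp (((σ : ℂ) + M * Complex.I) * (t : ℂ))) = FH M 0 (t : ℂ) :=
      funext fun σ => FH_eq M (t : ℂ) σ
    rw [e]
    exact (cont_FH M 0 (t : ℂ)).intervalIntegrable _ _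

/-! ### smoothness (indeed analyticity) -/

noncomputable def Pc (M : ℝ) (z : ℂ) : ℂ :=
  (1 / (2 * (Real.pi : ℂ) * Complex.I)) * Gm z M

lemma differentiable_Pc {M : ℝ} (hM : 0 < M) : Differentiable ℂ (Pc M) := fun z =>
  ((((hasDerivAt_IB hM (Or.inr rfl) 0 z).sub (hasDerivAt_IB hM (Or.inl rfl) 0 z)).sub
    (hasDerivAt_IH hM 0 z)).const_mul (1 / (2 * (Real.pi : ℂ) * Complex.I))).differentiableAt

lemma contDiff_target {M : ℝ} (hM : 0 < M) :
    ContDiff ℝ (⊤ : ℕ∞) (fun t : ℝ => Pc M (t : ℂ)) := by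
  have hA : AnalyticOnNhd ℂ (Pc M) Set.univ :=
    Complex.analyticOnNhd_univ_iff_differentiable.2 (differentiable_Pc hM)
  have hC : ContDiff ℝ (⊤ : ℕ∞) (Pc M) := ((hA.restrictScalars (𝕜 := ℝ)).contDiff)
  exact hC.comp Complex.ofRealCLM.contDiff

end Stmt16

open Stmt16 in
theorem statement16 (M : ℝ) (hM : 0 < M) :
    (∀ t : ℝ, GammaIntegrable M
      (fun ζ : ℂ => Complex.exp (Complex.exp (-ζ ^ 2)) * Complex.exp (ζ * t))) ∧
    (∀ M' : ℝ, 0 < M' → ∀ t : ℝ,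
      (1 / (2 * Real.pi * Complex.I)) *
        gammaInt M' (fun ζ : ℂ => Complex.exp (Complex.exp (-ζ ^ 2)) * Complex.exp (ζ * t)) =
      (1 / (2 * Real.pi * Complex.I)) *
        gammaInt M (fun ζ : ℂ => Complex.exp (Complex.exp (-ζ ^ 2)) * Complex.exp (ζ * t))) ∧
    ContDiff ℝ (⊤ : ℕ∞) (fun t : ℝ => (1 / (2 * Real.pi * Complex.I)) *
      gammaInt M (fun ζ : ℂ => Complex.exp (Complex.exp (-ζ ^ 2)) * Complex.exp (ζ * t))) := by
  refine ⟨fun t => gammaIntegrable hM t, fun M' hM' t => ?_, ?_⟩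
  · rw [gammaInt_eq, gammaInt_eq, Gm_const (t : ℂ) hM' hM]
  · have e : (fun t : ℝ => (1 / (2 * Real.pi * Complex.I)) *
        gammaInt M (fun ζ : ℂ => Complex.exp (Complex.exp (-ζ ^ 2)) * Complex.exp (ζ * t)))
        = fun t : ℝ => Pc M (t : ℂ) := funext fun t => by rw [gammaInt_eq]; rfl
    rw [e]
    exact contDiff_target hM
end
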